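/- arXiv:1801.04312 — 8 statements merged into one kernel-verified Lean document; each statement's English description precedes it below -/
import Mathlib

section
/- Let A be a ring and let 𝒞 be a class of right A-modules (closed under isomorphisms) that is closed under arbitrary direct sums and under quotient modules. Then Filt 𝒞, the class of 𝒞-filtered right A-modules, is a torsion class in Mod-A, i.e. it is closed under arbitrary direct sums, extensions and quotient modules. -/
universe u

open DirectSum

section Defs

variable {A : Type u} [Ring A]

/-- A class of modules is closed under isomorphisms. -/
def IsoClosed (𝒞 : ModuleCat.{u} A → Prop) : Prop :=
  ∀ (M N : ModuleCat.{u} A), (M ≃ₗ[A] N) → 𝒞 M → 𝒞 N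

/-- A class of modules is closed under quotient modules (epimorphic images). -/
def ClosedUnderQuotients (𝒞 : ModuleCat.{u} A → Prop) : Prop :=
  ∀ (M N : ModuleCat.{u} A) (f : M →ₗ[A] N), Function.Surjective f → 𝒞 M → 𝒞 N

/-- A class of modules is closed under extensions. -/
def ClosedUnderExtensions (𝒞 : ModuleCat.{u} A → Prop) : Prop :=
  ∀ (X Y Z : ModuleCat.{u} A) (f : X →ₗ[A] Y) (g : Y →ₗ[A] Z),
    Function.Injective f → Function.Surjective g →
    LinearMap.range f = LinearMap.ker g → 𝒞 X → 𝒞 Z → 𝒞 Y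

/-- A class of modules is closed under arbitrary direct sums. -/
def ClosedUnderDirectSums (𝒞 : ModuleCat.{u} A → Prop) : Prop :=
  ∀ (ι : Type u) (M : ι → ModuleCat.{u} A), (∀ i, 𝒞 (M i)) →
    𝒞 (ModuleCat.of A (⨁ i, (M i : Type u)))

/-- A class of modules is closed under arbitrary direct products. -/
def ClosedUnderProducts (𝒞 : ModuleCat.{u} A → Prop) : Prop :=
  ∀ (ι : Type u) (M : ι → ModuleCat.{u} A), (∀ i, 𝒞 (M i)) →
    𝒞 (ModuleCat.of A (∀ i, (M i : Type u)))

/-- A class of modules is closed under kernels of homomorphisms between its members. -/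
def ClosedUnderKernels (𝒞 : ModuleCat.{u} A → Prop) : Prop :=
  ∀ (M N : ModuleCat.{u} A) (f : M →ₗ[A] N), 𝒞 M → 𝒞 N →
    𝒞 (ModuleCat.of A (LinearMap.ker f))

/-- A class of modules is closed under cokernels of homomorphisms between its members. -/
def ClosedUnderCokernels (𝒞 : ModuleCat.{u} A → Prop) : Prop :=
  ∀ (M N : ModuleCat.{u} A) (f : M →ₗ[A] N), 𝒞 M → 𝒞 N →
    𝒞 (ModuleCat.of A ((N : Type u) ⧸ LinearMap.range f))

/-- A torsion class in Mod-A: an isomorphism-closed class of modules closed under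
quotients, extensions and arbitrary direct sums. -/
def IsTorsionClass (𝒯 : ModuleCat.{u} A → Prop) : Prop :=
  IsoClosed 𝒯 ∧ ClosedUnderQuotients 𝒯 ∧ ClosedUnderExtensions 𝒯 ∧ ClosedUnderDirectSums 𝒯

/-- `Gen 𝒞`: modules admitting a surjection from a direct sum of modules in `𝒞`. -/
def Gen (𝒞 : ModuleCat.{u} A → Prop) : ModuleCat.{u} A → Prop :=
  fun N => ∃ (ι : Type u) (M : ι → ModuleCat.{u} A)
    (f : (⨁ i, (M i : Type u)) →ₗ[A] N),
    (∀ i, 𝒞 (M i)) ∧ Function.Surjective f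

/-- `GenM T`: modules admitting a surjection from a direct sum of copies of `T`. -/
def GenM (T : ModuleCat.{u} A) : ModuleCat.{u} A → Prop :=
  fun N => ∃ (ι : Type u) (f : (ι →₀ (T : Type u)) →ₗ[A] N), Function.Surjective f

/-- `Filt 𝒞`: modules admitting an ordinal-indexed filtration whose consecutive factors
are isomorphic to modules in `𝒞`. -/
def Filt (𝒞 : ModuleCat.{u} A → Prop) : ModuleCat.{u} A → Prop :=
  fun M => ∃ (μ : Ordinal.{u}) (F : Ordinal.{u} → Submodule A M),
    Monotone F ∧ F 0 = ⊥ ∧ F μ = ⊤ ∧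
    (∀ ν ≤ μ, Order.IsSuccLimit ν → F ν = ⨆ (l : Ordinal.{u}) (_ : l < ν), F l) ∧
    (∀ l < μ, ∃ C : ModuleCat.{u} A, 𝒞 C ∧
      Nonempty ((↥(F (l + 1)) ⧸ (F l).comap (F (l + 1)).subtype) ≃ₗ[A] (C : Type u)))

/-- `FiltGen 𝒞 = Filt (Gen 𝒞)`. -/
def FiltGen (𝒞 : ModuleCat.{u} A → Prop) : ModuleCat.{u} A → Prop := Filt (Gen 𝒞)

/-- `aSub 𝒯 = 𝔞(𝒯)`: modules `X` in `𝒯` such that every homomorphism from a module of `𝒯`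
to `X` has kernel in `𝒯`. -/
def aSub (𝒯 : ModuleCat.{u} A → Prop) : ModuleCat.{u} A → Prop :=
  fun X => 𝒯 X ∧ ∀ (Y : ModuleCat.{u} A) (g : Y →ₗ[A] X), 𝒯 Y →
    𝒯 (ModuleCat.of A (LinearMap.ker g))

/-- A projective presentation `P →σ→ Q →π→ T → 0` of the module `T`. -/
structure ProjPres (T : ModuleCat.{u} A) where
  P : ModuleCat.{u} A
  Q : ModuleCat.{u} A
  σ : P →ₗ[A] Q
  π : Q →ₗ[A] T
  projP : Module.Projective A P
  projQ : Module.Projective A Q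
  exact : LinearMap.range σ = LinearMap.ker π
  surj : Function.Surjective π

/-- `Dclass σ = 𝒟_σ`: modules `X` such that `Hom(σ, X)` is surjective. -/
def Dclass {P Q : ModuleCat.{u} A} (σ : P →ₗ[A] Q) : ModuleCat.{u} A → Prop :=
  fun X => Function.Surjective (fun φ : Q →ₗ[A] (X : Type u) => φ.comp σ)

/-- A module `T` is silting if it has a projective presentation `σ` with `𝒟_σ = Gen T`. -/
def IsSilting (T : ModuleCat.{u} A) : Prop :=
  ∃ pp : ProjPres T, Dclass pp.σ = GenM T

/-- `T` is partial silting with respect to the projective presentation `pp`. -/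
def IsPartialSiltingWrt {T : ModuleCat.{u} A} (pp : ProjPres T) : Prop :=
  IsTorsionClass (Dclass pp.σ) ∧ Dclass pp.σ T

/-- A presilting presentation: every direct sum of copies of `T` lies in `𝒟_σ`. -/
def IsPresilting {T : ModuleCat.{u} A} (pp : ProjPres T) : Prop :=
  ∀ ι : Type u, Dclass pp.σ (ModuleCat.of A (ι →₀ (T : Type u)))

/-- `X ∈ Add T`: `X` is a direct summand of a direct sum of copies of `T`. -/
def memAdd (T X : ModuleCat.{u} A) : Prop :=
  ∃ (ι : Type u) (i : X →ₗ[A] (ι →₀ (T : Type u))) (r : (ι →₀ (T : Type u)) →ₗ[A] X),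
    r.comp i = LinearMap.id

/-- `f : N → X` is a left `Add T`-approximation. -/
def IsLeftAddApprox (T : ModuleCat.{u} A) {N X : ModuleCat.{u} A} (f : N →ₗ[A] X) : Prop :=
  memAdd T X ∧ ∀ (Z : ModuleCat.{u} A), memAdd T Z → ∀ g : N →ₗ[A] Z,
    ∃ h : X →ₗ[A] Z, h.comp f = g

/-- A submodule `N` of `M` is superfluous if `K ⊔ N = ⊤` implies `K = ⊤`. -/
def IsSuperfluous {M : ModuleCat.{u} A} (N : Submodule A M) : Prop :=
  ∀ K : Submodule A M, K ⊔ N = ⊤ → K = ⊤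

/-- A minimal projective presentation: `π` is a projective cover, and the induced map
`P → Ker π` is a projective cover (equivalently, `Ker σ` is superfluous in `P`). -/
def IsMinimalPres {T : ModuleCat.{u} A} (pp : ProjPres T) : Prop :=
  IsSuperfluous (LinearMap.ker pp.π) ∧ IsSuperfluous (LinearMap.ker pp.σ)

/-- A torsion class in mod-A: a torsion class consisting of finitely generated
(equivalently, over a finite dimensional algebra, finite dimensional) modules. -/
def IsTorsionClassfd (𝒯 : ModuleCat.{u} A → Prop) : Prop :=
  (∀ M, 𝒯 M → Module.Finite A M) ∧ IsoClosed 𝒯 ∧ ClosedUnderQuotients 𝒯 ∧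
    ClosedUnderExtensions 𝒯

/-- A subcategory `𝒳` of mod-A is functorially finite if every finite dimensional module
admits a left and a right `𝒳`-approximation. -/
def FunctoriallyFinite (𝒳 : ModuleCat.{u} A → Prop) : Prop :=
  (∀ N : ModuleCat.{u} A, Module.Finite A N →
    ∃ (X : ModuleCat.{u} A) (f : N →ₗ[A] X), 𝒳 X ∧
      ∀ (X' : ModuleCat.{u} A), 𝒳 X' → ∀ g : N →ₗ[A] X', ∃ h : X →ₗ[A] X', h.comp f = g) ∧
  (∀ N : ModuleCat.{u} A, Module.Finite A N →
    ∃ (X : ModuleCat.{u} A) (f : X →ₗ[A] N), 𝒳 X ∧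
      ∀ (X' : ModuleCat.{u} A), 𝒳 X' → ∀ g : X' →ₗ[A] N, ∃ h : X' →ₗ[A] X, f.comp h = g)

/-- A bireflective subcategory of Mod-A: isomorphism-closed and closed under products,
coproducts, kernels and cokernels. -/
def Bireflective (𝒞 : ModuleCat.{u} A → Prop) : Prop :=
  IsoClosed 𝒞 ∧ ClosedUnderProducts 𝒞 ∧ ClosedUnderDirectSums 𝒞 ∧
    ClosedUnderKernels 𝒞 ∧ ClosedUnderCokernels 𝒞

end Defs

/-!
Call `W` torsion-free with respect to `𝒞` if no nonzero submodule of `W` lies in `𝒞` (for `𝒞`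
closed under quotients this says `Hom(C, W) = 0` for all `C ∈ 𝒞`), and call `M` torsion if
`Hom(M, W) = 0` for every such `W`. A class defined by the vanishing of `Hom(-, W)` is
obviously closed under quotients, extensions and direct sums, so it suffices to show that the
torsion modules are exactly the `𝒞`-filtered ones. A filtration of `M` is killed by a map to a
torsion-free module one step at a time, by transfinite induction. Conversely, every proper
quotient `M ⧸ N` of a torsion module has a nonzero submodule in `𝒞`, whose preimage enlarges `N`
with a factor in `𝒞`; iterating this transfinitely reaches `⊤`, since an injective map from the
ordinals to the small type of submodules cannot exist.
-/

section TorsionTheory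

variable {A : Type u} [Ring A] {𝒞 : ModuleCat.{u} A → Prop}

def IsTorsionFreeWrt (𝒞 : ModuleCat.{u} A → Prop) (W : Type u) [AddCommGroup W] [Module A W] :
    Prop :=
  ∀ S : Submodule A W, 𝒞 (ModuleCat.of A S) → S = ⊥

def IsTorsionWrt (𝒞 : ModuleCat.{u} A → Prop) (M : Type u) [AddCommGroup M] [Module A M] :
    Prop :=
  ∀ (W : Type u) [AddCommGroup W] [Module A W], IsTorsionFreeWrt 𝒞 W → ∀ f : M →ₗ[A] W, f = 0

variable {M N W : Type u} [AddCommGroup M] [Module A M] [AddCommGroup N] [Module A N]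
  [AddCommGroup W] [Module A W]

theorem IsTorsionFreeWrt.linearMap_eq_zero (h_quot : ClosedUnderQuotients 𝒞)
    (hW : IsTorsionFreeWrt 𝒞 W) {C : ModuleCat.{u} A} (hC : 𝒞 C) (g : C →ₗ[A] W) : g = 0 :=
  LinearMap.range_eq_bot.1 <|
    hW _ (h_quot C (ModuleCat.of A (LinearMap.range g)) _ g.surjective_rangeRestrict hC)

theorem IsTorsionFreeWrt.le_ker_of_quotient_equiv (h_quot : ClosedUnderQuotients 𝒞)
    (hW : IsTorsionFreeWrt 𝒞 W) {f : M →ₗ[A] W} {P P' : Submodule A M} (hP : P ≤ LinearMap.ker f)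
    {C : ModuleCat.{u} A} (hC : 𝒞 C) (e : (P' ⧸ P.comap P'.subtype) ≃ₗ[A] C) :
    P' ≤ LinearMap.ker f := by
  have hle : P.comap P'.subtype ≤ LinearMap.ker (f ∘ₗ P'.subtype) := by
    rw [LinearMap.ker_comp]
    exact Submodule.comap_mono hP
  intro x hx
  simpa using LinearMap.congr_fun (hW.linearMap_eq_zero h_quot hC
    ((P.comap P'.subtype).liftQ _ hle ∘ₗ e.symm.toLinearMap)) (e (Submodule.Quotient.mk ⟨x, hx⟩))

theorem IsTorsionWrt.of_surjective (hM : IsTorsionWrt 𝒞 M) (g : M →ₗ[A] N)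
    (hg : Function.Surjective g) : IsTorsionWrt 𝒞 N := fun W _ _ hW f =>
  (LinearMap.cancel_right hg).1 <| by rw [LinearMap.zero_comp]; exact hM W hW (f ∘ₗ g)

theorem IsTorsionWrt.of_exact {X Y Z : Type u} [AddCommGroup X] [Module A X] [AddCommGroup Y]
    [Module A Y] [AddCommGroup Z] [Module A Z] (i : X →ₗ[A] Y) (g : Y →ₗ[A] Z)
    (hg : Function.Surjective g) (hig : LinearMap.range i = LinearMap.ker g)
    (hX : IsTorsionWrt 𝒞 X) (hZ : IsTorsionWrt 𝒞 Z) : IsTorsionWrt 𝒞 Y := by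
  intro W _ _ hW f
  have hle : LinearMap.ker g ≤ LinearMap.ker f := by
    rw [← hig, LinearMap.range_le_ker_iff]
    exact hX W hW (f ∘ₗ i)
  have hquot : IsTorsionWrt 𝒞 (Y ⧸ LinearMap.ker g) :=
    hZ.of_surjective _ (g.quotKerEquivOfSurjective hg).symm.surjective
  ext y
  simpa using LinearMap.congr_fun (hquot W hW ((LinearMap.ker g).liftQ f hle))
    (Submodule.Quotient.mk y)

theorem IsTorsionWrt.directSum {ι : Type u} {M : ι → Type u} [∀ i, AddCommGroup (M i)]
    [∀ i, Module A (M i)] (hM : ∀ i, IsTorsionWrt 𝒞 (M i)) : IsTorsionWrt 𝒞 (⨁ i, M i) := by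
  classical
  intro W _ _ hW f
  refine DirectSum.linearMap_ext A fun i => ?_
  rw [LinearMap.zero_comp]
  exact hM i W hW _

theorem isTorsionWrt_of_filt (h_quot : ClosedUnderQuotients 𝒞) {M : ModuleCat.{u} A}
    (hM : Filt 𝒞 M) : IsTorsionWrt 𝒞 M := by
  obtain ⟨μ, F, -, hF0, hFμ, hlim, hfac⟩ := hM
  intro W _ _ hW f
  suffices ∀ o ≤ μ, F o ≤ LinearMap.ker f by
    rw [← LinearMap.ker_eq_top, eq_top_iff, ← hFμ]
    exact this μ le_rfl
  intro o
  induction o using Ordinal.limitRecOn with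
  | zero => exact fun _ => hF0 ▸ bot_le
  | add_one l ih =>
    intro hl
    have hlμ : l < μ := (Order.lt_add_one_iff.2 le_rfl).trans_le hl
    obtain ⟨C, hC, ⟨e⟩⟩ := hfac l hlμ
    exact hW.le_ker_of_quotient_equiv h_quot (ih hlμ.le) hC e
  | limit o ho ih =>
    intro hoμ
    rw [hlim o hoμ ho]
    exact iSup₂_le fun l hl => ih l hl (hl.le.trans hoμ)

noncomputable def Submodule.comapMkQQuotientEquiv (N : Submodule A M) (S : Submodule A (M ⧸ N)) :
    (S.comap N.mkQ ⧸ N.comap (S.comap N.mkQ).subtype) ≃ₗ[A] S :=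
  have hsurj : Function.Surjective (N.mkQ.restrict (p := S.comap N.mkQ) fun _ hx => hx) :=
    fun ⟨s, hs⟩ => by
      obtain ⟨x, rfl⟩ := N.mkQ_surjective s
      exact ⟨⟨x, hs⟩, rfl⟩
  Submodule.quotEquivOfEq _ _ (by rw [LinearMap.ker_restrict, Submodule.ker_mkQ]) ≪≫ₗ
    LinearMap.quotKerEquivOfSurjective _ hsurj

theorem filt_of_forall_ne_top_exists_gt {M : ModuleCat.{u} A}
    (h : ∀ N : Submodule A M, N ≠ ⊤ → ∃ N', N < N' ∧
      ∃ C : ModuleCat.{u} A, 𝒞 C ∧ Nonempty ((N' ⧸ N.comap N'.subtype) ≃ₗ[A] C)) :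
    Filt 𝒞 M := by
  classical
  choose step hlt hC using h
  let φ (N : Submodule A M) : Submodule A M := if hN : N = ⊤ then ⊤ else step N hN
  have hφ : ∀ N ≠ ⊤, N < φ N := fun N hN => by simpa [φ, hN] using hlt N hN
  let F (o : Ordinal.{u}) : Submodule A M := transfiniteIterate φ o ⊥
  obtain ⟨μ, hμ⟩ := top_mem_range_transfiniteIterate φ ⊥ hφ (by simp [φ])
    (not_injective_of_ordinal F)
  obtain ⟨μ, hμ, hmin⟩ := WellFounded.has_min wellFounded_lt {o | F o = ⊤} ⟨μ, hμ⟩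
  refine ⟨μ, F, monotone_transfiniteIterate φ ⊥ fun N => ?_, transfiniteIterate_bot φ ⊥, hμ,
    fun ν _ hν => ?_, fun l hl => ?_⟩
  · by_cases hN : N = ⊤
    · simp [φ, hN]
    · exact (hφ N hN).le
  · change transfiniteIterate φ ν ⊥ = _
    rw [transfiniteIterate_limit φ ⊥ ν hν, iSup_subtype']
    rfl
  · have hFl : F l ≠ ⊤ := fun h => hmin l h hl
    have hsucc : F (l + 1) = step (F l) hFl := by
      change transfiniteIterate φ (l + 1) ⊥ = _
      rw [← Order.succ_eq_add_one, transfiniteIterate_succ φ ⊥ l (not_isMax l)]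
      exact dif_neg hFl
    rw [hsucc]
    exact hC _ hFl

theorem filt_of_isTorsionWrt {M : ModuleCat.{u} A} (hM : IsTorsionWrt 𝒞 M) : Filt 𝒞 M := by
  refine filt_of_forall_ne_top_exists_gt fun N hN => ?_
  have hnotFree : ¬ IsTorsionFreeWrt 𝒞 (M ⧸ N) := fun hfree => hN <| by
    rw [← Submodule.ker_mkQ N, hM _ hfree N.mkQ, LinearMap.ker_zero]
  obtain ⟨S, hS, hS0⟩ : ∃ S : Submodule A (M ⧸ N), 𝒞 (ModuleCat.of A S) ∧ S ≠ ⊥ := by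
    simpa [IsTorsionFreeWrt] using hnotFree
  refine ⟨S.comap N.mkQ, ?_, _, hS, ⟨N.comapMkQQuotientEquiv S⟩⟩
  simpa only [Submodule.comap_bot, Submodule.ker_mkQ] using
    Submodule.comap_strictMono_of_surjective N.mkQ_surjective (bot_lt_iff_ne_bot.2 hS0)

theorem filt_iff_isTorsionWrt (h_quot : ClosedUnderQuotients 𝒞) {M : ModuleCat.{u} A} :
    Filt 𝒞 M ↔ IsTorsionWrt 𝒞 M :=
  ⟨isTorsionWrt_of_filt h_quot, filt_of_isTorsionWrt⟩

end TorsionTheory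

theorem stmt0_general {A : Type u} [Ring A] (𝒞 : ModuleCat.{u} A → Prop)
    (h_quot : ClosedUnderQuotients 𝒞) :
    IsTorsionClass (Filt 𝒞) := by
  simp only [IsTorsionClass, IsoClosed, ClosedUnderQuotients, ClosedUnderExtensions,
    ClosedUnderDirectSums, filt_iff_isTorsionWrt h_quot]
  refine ⟨fun M N e hM => hM.of_surjective e.toLinearMap e.surjective,
    fun M N f hf hM => hM.of_surjective f hf,
    fun X Y Z i g _ hg hig hX hZ => IsTorsionWrt.of_exact i g hg hig hX hZ,
    fun ι M hM => IsTorsionWrt.directSum hM⟩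

/-- If `𝒞` is closed under isomorphisms, arbitrary direct sums and quotient
modules, then `Filt 𝒞` is a torsion class in Mod-A. -/
theorem stmt0 {A : Type u} [Ring A] (𝒞 : ModuleCat.{u} A → Prop)
    (h_iso : IsoClosed 𝒞) (h_sum : ClosedUnderDirectSums 𝒞)
    (h_quot : ClosedUnderQuotients 𝒞) :
    IsTorsionClass (Filt 𝒞) :=
  stmt0_general 𝒞 h_quot
end

section
/- Let A be a ring and let 𝒞 be a class of right A-modules, closed under isomorphisms, that is closed under kernels and cokernels of homomorphisms between modules in 𝒞, under arbitrary direct sums, and under extensions. Then 𝒞 is closed under submodules inside FiltGen 𝒞: if C is a module in 𝒞 and Y is a submodule of C with Y ∈ FiltGen 𝒞, then Y ∈ 𝒞. -/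
universe u

open DirectSum

/-!
Every module `N` sandwiched as `S ↠ N ↪ D` with `S, D ∈ 𝒞` lies in `𝒞`, since `N` is the
image of `S → D`, i.e. the kernel of `D → coker (S → D)`. In particular a module of `Gen 𝒞`
embedded in a module of `𝒞` lies in `𝒞`, and so does a sum of `𝒞`-submodules of `C`
(an image of their direct sum). Now run transfinite induction along a `Gen 𝒞`-filtration
`(Y_λ)` of `Y ⊆ C`: at limit steps `Y_λ` is such a sum, and at successor steps
`Y_{λ+1} / Y_λ ∈ Gen 𝒞` embeds in `C / Y_λ ∈ 𝒞`, so it lies in `𝒞`, and `Y_{λ+1}` is an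
extension of it by `Y_λ`.
-/

section

variable {A : Type u} [Ring A] {𝒞 : ModuleCat.{u} A → Prop}

theorem Gen.of_linearEquiv {N N' : ModuleCat.{u} A} (e : N ≃ₗ[A] N') (hN : Gen 𝒞 N) :
    Gen 𝒞 N' := by
  obtain ⟨ι, M, g, hM, hg⟩ := hN
  exact ⟨ι, M, e.toLinearMap ∘ₗ g, hM, e.surjective.comp hg⟩

theorem mem_of_surjective_of_injective (h_iso : IsoClosed 𝒞) (h_ker : ClosedUnderKernels 𝒞)
    (h_coker : ClosedUnderCokernels 𝒞) {S N D : ModuleCat.{u} A} (hS : 𝒞 S) (hD : 𝒞 D)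
    (g : S →ₗ[A] N) (hg : Function.Surjective g) (f : N →ₗ[A] D) (hf : Function.Injective f) :
    𝒞 N := by
  have h_range : 𝒞 (ModuleCat.of A (LinearMap.range (f ∘ₗ g))) := by
    have h := h_ker D _ (LinearMap.range (f ∘ₗ g)).mkQ hD (h_coker S D (f ∘ₗ g) hS hD)
    rwa [Submodule.ker_mkQ] at h
  rw [LinearMap.range_comp_of_range_eq_top f (LinearMap.range_eq_top.2 hg)] at h_range
  exact h_iso _ _ (LinearEquiv.ofInjective f hf).symm h_range

theorem mem_of_subsingleton (h_iso : IsoClosed 𝒞) (h_ker : ClosedUnderKernels 𝒞)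
    (h_coker : ClosedUnderCokernels 𝒞) {D : ModuleCat.{u} A} (hD : 𝒞 D)
    (N : ModuleCat.{u} A) [Subsingleton N] : 𝒞 N :=
  mem_of_surjective_of_injective h_iso h_ker h_coker hD hD 0
    (Function.surjective_to_subsingleton _) 0 (Function.injective_of_subsingleton _)

theorem mem_of_gen_of_injective (h_iso : IsoClosed 𝒞) (h_ker : ClosedUnderKernels 𝒞)
    (h_coker : ClosedUnderCokernels 𝒞) (h_sum : ClosedUnderDirectSums 𝒞)
    {N D : ModuleCat.{u} A} (hN : Gen 𝒞 N) (hD : 𝒞 D) (f : N →ₗ[A] D)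
    (hf : Function.Injective f) : 𝒞 N := by
  obtain ⟨ι, M, g, hM, hg⟩ := hN
  exact mem_of_surjective_of_injective h_iso h_ker h_coker (h_sum ι M hM) hD g hg f hf

theorem iSup_mem_of_injective (h_iso : IsoClosed 𝒞) (h_ker : ClosedUnderKernels 𝒞)
    (h_coker : ClosedUnderCokernels 𝒞) (h_sum : ClosedUnderDirectSums 𝒞)
    {ι : Type*} [Small.{u} ι] {M D : ModuleCat.{u} A} (hD : 𝒞 D) (j : M →ₗ[A] D)
    (hj : Function.Injective j) (p : ι → Submodule A M)
    (hp : ∀ i, 𝒞 (ModuleCat.of A (p i))) : 𝒞 (ModuleCat.of A ↥(⨆ i, p i)) := by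
  classical
  rw [← (equivShrink ι).symm.iSup_comp]
  set q : Shrink.{u} ι → Submodule A M := fun k => p ((equivShrink ι).symm k)
  have h_sum_q := h_sum _ (fun k => ModuleCat.of A (q k)) fun k => hp _
  set g := DFinsupp.lsum ℕ fun k => (q k).subtype
  have h_range : LinearMap.range g = ⨆ k, q k := (Submodule.iSup_eq_range_dfinsupp_lsum q).symm
  exact mem_of_surjective_of_injective h_iso h_ker h_coker h_sum_q hD
    ((LinearEquiv.ofEq _ _ h_range).toLinearMap ∘ₗ g.rangeRestrict)
    ((LinearEquiv.ofEq _ _ h_range).surjective.comp g.surjective_rangeRestrict)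
    (j ∘ₗ Submodule.subtype _) (hj.comp Subtype.val_injective)

theorem mem_of_le_of_quotient_mem (h_ext : ClosedUnderExtensions 𝒞) {M : Type u}
    [AddCommGroup M] [Module A M] {N N' : Submodule A M} (hle : N ≤ N')
    (hN : 𝒞 (ModuleCat.of A N)) (hQ : 𝒞 (ModuleCat.of A (N' ⧸ N.comap N'.subtype))) :
    𝒞 (ModuleCat.of A N') :=
  h_ext (ModuleCat.of A N) (ModuleCat.of A N') (ModuleCat.of A (N' ⧸ N.comap N'.subtype))
    (Submodule.inclusion hle) (N.comap N'.subtype).mkQ (Submodule.inclusion_injective hle)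
    (Submodule.mkQ_surjective _) (by rw [Submodule.range_inclusion, Submodule.ker_mkQ]) hN hQ

theorem mem_of_le_of_quotient_gen (h_iso : IsoClosed 𝒞) (h_ker : ClosedUnderKernels 𝒞)
    (h_coker : ClosedUnderCokernels 𝒞) (h_sum : ClosedUnderDirectSums 𝒞)
    (h_ext : ClosedUnderExtensions 𝒞) {M D : ModuleCat.{u} A} (hD : 𝒞 D) (j : M →ₗ[A] D)
    (hj : Function.Injective j) {N N' : Submodule A M} (hle : N ≤ N')
    (hN : 𝒞 (ModuleCat.of A N)) (hQ : Gen 𝒞 (ModuleCat.of A (N' ⧸ N.comap N'.subtype))) :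
    𝒞 (ModuleCat.of A N') := by
  have h_ker_eq : N.comap N'.subtype =
      LinearMap.ker ((LinearMap.range (j ∘ₗ N.subtype)).mkQ ∘ₗ j ∘ₗ N'.subtype) := by
    rw [LinearMap.ker_comp, Submodule.ker_mkQ, LinearMap.range_comp, Submodule.range_subtype,
      Submodule.comap_comp, Submodule.comap_map_eq_of_injective hj]
  exact mem_of_le_of_quotient_mem h_ext hle hN
    (mem_of_gen_of_injective h_iso h_ker h_coker h_sum hQ (h_coker _ _ _ hN hD) _
      (LinearMap.ker_eq_bot.1 (Submodule.ker_liftQ_eq_bot' _ _ h_ker_eq)))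

theorem mem_of_filt_gen_of_injective (h_iso : IsoClosed 𝒞) (h_ker : ClosedUnderKernels 𝒞)
    (h_coker : ClosedUnderCokernels 𝒞) (h_sum : ClosedUnderDirectSums 𝒞)
    (h_ext : ClosedUnderExtensions 𝒞) {M D : ModuleCat.{u} A} (hD : 𝒞 D) (j : M →ₗ[A] D)
    (hj : Function.Injective j) (hM : FiltGen 𝒞 M) : 𝒞 M := by
  obtain ⟨μ, F, hmono, hF0, hFμ, hF_lim, hF_succ⟩ := hM
  suffices h : ∀ o ≤ μ, 𝒞 (ModuleCat.of A (F o)) from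
    h_iso _ _ (LinearEquiv.ofTop _ hFμ) (h μ le_rfl)
  intro o
  induction o using Ordinal.limitRecOn with
  | zero =>
    intro _
    rw [hF0]
    exact mem_of_subsingleton h_iso h_ker h_coker hD _
  | add_one o ih =>
    intro ho
    have hlt : o < μ := Order.succ_le_iff.mp ho
    obtain ⟨C, hC, ⟨e⟩⟩ := hF_succ o hlt
    exact mem_of_le_of_quotient_gen h_iso h_ker h_coker h_sum h_ext hD j hj (hmono le_self_add)
      (ih hlt.le) (hC.of_linearEquiv e.symm)
  | limit o ho ih =>
    intro hoμ
    have : Small.{u} {l // l < o} := Ordinal.small_Iio o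
    rw [hF_lim o hoμ ho, iSup_subtype']
    exact iSup_mem_of_injective h_iso h_ker h_coker h_sum hD j hj _
      fun l => ih l l.2 (l.2.le.trans hoμ)

end

/-- If `𝒞` is closed under isomorphisms, kernels, cokernels, direct sums and
extensions, then `𝒞` is closed under submodules inside `FiltGen 𝒞`. -/
theorem stmt2 {A : Type u} [Ring A] (𝒞 : ModuleCat.{u} A → Prop)
    (h_iso : IsoClosed 𝒞) (h_ker : ClosedUnderKernels 𝒞) (h_coker : ClosedUnderCokernels 𝒞)
    (h_sum : ClosedUnderDirectSums 𝒞) (h_ext : ClosedUnderExtensions 𝒞)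
    (C : ModuleCat.{u} A) (hC : 𝒞 C) (Y : Submodule A C)
    (hY : FiltGen 𝒞 (ModuleCat.of A Y)) :
    𝒞 (ModuleCat.of A Y) :=
  mem_of_filt_gen_of_injective h_iso h_ker h_coker h_sum h_ext hC Y.subtype Y.injective_subtype hY
end

section
/- Let A be a ring and let 𝒞 be a class of right A-modules, closed under isomorphisms, that is closed under kernels and cokernels of homomorphisms between modules in 𝒞, under arbitrary direct sums, and under extensions. Then 𝔞(FiltGen 𝒞) = 𝒞, where 𝔞(𝒯) := {X ∈ 𝒯 : for every homomorphism g : Y → X with Y ∈ 𝒯, Ker g ∈ 𝒯}. -/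
/-!
Say that a module `X` has ranges in `𝒞` if every map from a module of `𝒞` to `X` has its
image in `𝒞`. Modules of `𝒞` have this property, because `𝒞` is closed under kernels and
cokernels. If `X` has it and `(Y_λ)` is a `Gen 𝒞`-filtration of `Y`, then for every
`g : Y → X` each image `g(Y_λ)` lies in `𝒞`, by transfinite induction. At limit stages
`g(Y_λ)` is the image of a direct sum. At successor stages `g(Y_{λ+1})` is an extension of a
`Gen 𝒞`-module by `g(Y_λ) ∈ 𝒞`, so a pullback makes it a quotient of a module of `𝒞`.

Modules `X ∈ 𝔞(FiltGen 𝒞)` also have ranges in `𝒞`: the kernel of a map `P → X` with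
`P ∈ 𝒞` lies in `FiltGen 𝒞` and embeds in `P`, so it lies in `𝒞`. Applying this to the
identity of `X` gives `X ∈ 𝒞`. Conversely, for `X ∈ 𝒞` and `g : Y → X`, intersecting a
`Gen 𝒞`-filtration of `Y` with `Ker g` gives a filtration of `Ker g`. Its factors are the
kernels of the maps `Y_{λ+1}/Y_λ → X/g(Y_λ)` from `Gen 𝒞` to `𝒞`, and such kernels lie in
`Gen 𝒞`.
-/

universe u

open DirectSum

open Order

theorem Ordinal.iSup_lt_eq_iSup_toType {α : Type*} [CompleteLattice α] (o : Ordinal.{u})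
    (F : Ordinal.{u} → α) : ⨆ (l : Ordinal.{u}) (_ : l < o), F l = ⨆ t : o.ToType, F t.toOrd := by
  rw [iSup_subtype']
  exact (Ordinal.ToType.mk.symm.iSup_comp (g := fun x : Set.Iio o => F x)).symm

theorem continuousChain_induction {α : Type*} [CompleteLattice α] {F : Ordinal.{u} → α}
    {μ : Ordinal.{u}} (h0 : F 0 = ⊥)
    (hlim : ∀ ν ≤ μ, IsSuccLimit ν → F ν = ⨆ (l : Ordinal.{u}) (_ : l < ν), F l)
    {P : α → Prop} (hsup : ∀ (ι : Type u) (N : ι → α), (∀ i, P (N i)) → P (⨆ i, N i))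
    (hsucc : ∀ l < μ, P (F l) → P (F (l + 1))) : ∀ l ≤ μ, P (F l) := by
  intro l
  induction l using WellFoundedLT.induction with
  | _ l IH =>
  intro hl
  rcases Ordinal.zero_or_succ_or_isSuccLimit l with rfl | ⟨ν, rfl⟩ | hlim_l
  · simpa [h0] using hsup PEmpty (fun _ => ⊥) (fun i => i.elim)
  · rw [succ_eq_add_one] at hl ⊢
    have hν : ν < ν + 1 := lt_add_one ν
    exact hsucc ν (hν.trans_le hl) (IH ν hν (hν.le.trans hl))
  · rw [hlim l hl hlim_l, Ordinal.iSup_lt_eq_iSup_toType]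
    exact hsup _ _ fun t => IH _ t.toOrd.2 (t.toOrd.2.le.trans hl)

theorem Submodule.comap_iSup_of_directed {R M N : Type*} [Semiring R] [AddCommMonoid M]
    [Module R M] [AddCommMonoid N] [Module R N] (f : M →ₗ[R] N) {ι : Type*} [Nonempty ι]
    {p : ι → Submodule R N} (hp : Directed (· ≤ ·) p) :
    (⨆ i, p i).comap f = ⨆ i, (p i).comap f := by
  refine le_antisymm (fun x hx => ?_) (iSup_le fun i => Submodule.comap_mono (le_iSup p i))
  obtain ⟨i, hi⟩ := (Submodule.mem_iSup_of_directed p hp).1 hx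
  exact Submodule.mem_iSup_of_mem i hi

section Modules

variable {A : Type u} [Ring A]

abbrev Subquotient {M : Type u} [AddCommGroup M] [Module A M] (a b : Submodule A M) : Type u :=
  ↥b ⧸ a.comap b.subtype

structure IsFiltrationBy (𝒟 : ModuleCat.{u} A → Prop) {M : Type u} [AddCommGroup M] [Module A M]
    (μ : Ordinal.{u}) (F : Ordinal.{u} → Submodule A M) : Prop where
  mono : Monotone F
  zero : F 0 = ⊥
  top : F μ = ⊤
  limit : ∀ ν ≤ μ, IsSuccLimit ν → F ν = ⨆ (l : Ordinal.{u}) (_ : l < ν), F l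
  factor : ∀ l < μ, ∃ C : ModuleCat.{u} A, 𝒟 C ∧ Nonempty (Subquotient (F l) (F (l + 1)) ≃ₗ[A] C)

theorem filt_iff {𝒟 : ModuleCat.{u} A → Prop} {M : ModuleCat.{u} A} :
    Filt 𝒟 M ↔ ∃ (μ : Ordinal.{u}) (F : Ordinal.{u} → Submodule A M), IsFiltrationBy 𝒟 μ F :=
  ⟨fun ⟨μ, F, h₁, h₂, h₃, h₄, h₅⟩ => ⟨μ, F, h₁, h₂, h₃, h₄, h₅⟩,
    fun ⟨μ, F, h⟩ => ⟨μ, F, h.mono, h.zero, h.top, h.limit, h.factor⟩⟩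

theorem filt_of_mem {𝒟 : ModuleCat.{u} A → Prop} {M : ModuleCat.{u} A} (hM : 𝒟 M) : Filt 𝒟 M := by
  refine ⟨1, fun ν => if ν = 0 then ⊥ else ⊤, ?_, if_pos rfl, if_neg one_ne_zero, ?_, ?_⟩
  · intro a b hab
    dsimp only
    split_ifs <;> simp_all
  · intro ν hν hlim
    exact absurd hν (Ordinal.one_lt_of_isSuccLimit hlim).not_ge
  · intro l hl
    obtain rfl := Order.lt_one_iff.mp hl
    exact ⟨M, hM, ⟨(Submodule.quotEquivOfEqBot _ (by simp)).trans
      ((LinearEquiv.ofEq _ ⊤ (if_neg (by simp))).trans Submodule.topEquiv)⟩⟩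

variable {𝒞 : ModuleCat.{u} A → Prop}

theorem gen_of_mem {M : ModuleCat.{u} A} (hM : 𝒞 M) : Gen 𝒞 M := by
  refine ⟨PUnit, fun _ => M, DirectSum.toModule A PUnit M fun _ => LinearMap.id, fun _ => hM,
    fun m => ⟨DirectSum.lof A PUnit (fun _ => M) .unit m, ?_⟩⟩
  rw [DirectSum.toModule_lof]
  rfl

theorem Gen.of_surjective {M N : ModuleCat.{u} A} (hM : Gen 𝒞 M) (f : M →ₗ[A] N)
    (hf : Function.Surjective f) : Gen 𝒞 N :=
  let ⟨ι, C, π, hC, hπ⟩ := hM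
  ⟨ι, C, f ∘ₗ π, hC, hf.comp hπ⟩

theorem IsFiltrationBy.gen_factor {M : Type u} [AddCommGroup M] [Module A M] {μ : Ordinal.{u}} {F : Ordinal.{u} → Submodule A M}
    (hF : IsFiltrationBy (Gen 𝒞) μ F) {l : Ordinal.{u}} (hl : l < μ) :
    Gen 𝒞 (ModuleCat.of A (Subquotient (F l) (F (l + 1)))) :=
  let ⟨_, hC, ⟨e⟩⟩ := hF.factor l hl
  Gen.of_surjective hC e.symm.toLinearMap e.symm.surjective

theorem exists_surjective_of_gen (h_sum : ClosedUnderDirectSums 𝒞) {N : ModuleCat.{u} A}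
    (hN : Gen 𝒞 N) : ∃ (P : ModuleCat.{u} A) (π : P →ₗ[A] N), 𝒞 P ∧ Function.Surjective π :=
  let ⟨ι, C, π, hC, hπ⟩ := hN
  ⟨ModuleCat.of A (⨁ i, C i), π, h_sum ι C hC, hπ⟩

theorem IsoClosed.of_equiv (h_iso : IsoClosed 𝒞) {M N : Type u} [AddCommGroup M] [Module A M]
    [AddCommGroup N] [Module A N] (e : M ≃ₗ[A] N) (hM : 𝒞 (ModuleCat.of A M)) :
    𝒞 (ModuleCat.of A N) :=
  h_iso _ _ e hM

variable (h_iso : IsoClosed 𝒞) (h_ker : ClosedUnderKernels 𝒞) (h_coker : ClosedUnderCokernels 𝒞)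
  (h_sum : ClosedUnderDirectSums 𝒞) (h_ext : ClosedUnderExtensions 𝒞)
  {M N X : Type u} [AddCommGroup M] [Module A M] [AddCommGroup N] [Module A N]
  [AddCommGroup X] [Module A X]

include h_iso h_coker in
theorem quotient_mem {p : Submodule A M} (hM : 𝒞 (ModuleCat.of A M))
    (hp : 𝒞 (ModuleCat.of A p)) : 𝒞 (ModuleCat.of A (M ⧸ p)) :=
  h_iso.of_equiv (Submodule.quotEquivOfEq _ _ p.range_subtype)
    (h_coker (ModuleCat.of A p) (ModuleCat.of A M) p.subtype hp hM)

include h_iso h_coker in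
theorem range_mem_of_ker_mem {f : M →ₗ[A] N} (hM : 𝒞 (ModuleCat.of A M))
    (hf : 𝒞 (ModuleCat.of A (LinearMap.ker f))) : 𝒞 (ModuleCat.of A (LinearMap.range f)) :=
  h_iso.of_equiv f.quotKerEquivRange (quotient_mem h_iso h_coker hM hf)

include h_iso h_ker h_coker in
theorem range_mem (f : M →ₗ[A] N) (hM : 𝒞 (ModuleCat.of A M)) (hN : 𝒞 (ModuleCat.of A N)) :
    𝒞 (ModuleCat.of A (LinearMap.range f)) :=
  range_mem_of_ker_mem h_iso h_coker hM (h_ker (ModuleCat.of A M) (ModuleCat.of A N) f hM hN)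

include h_ker h_sum in
theorem gen_ker (f : M →ₗ[A] N) (hM : Gen 𝒞 (ModuleCat.of A M)) (hN : 𝒞 (ModuleCat.of A N)) :
    Gen 𝒞 (ModuleCat.of A (LinearMap.ker f)) := by
  obtain ⟨P, π, hP, hπ⟩ := exists_surjective_of_gen h_sum hM
  have hker : 𝒞 (ModuleCat.of A (LinearMap.ker (f ∘ₗ π))) := h_ker P (ModuleCat.of A N) _ hP hN
  refine (gen_of_mem hker).of_surjective (π.restrict fun x hx => hx) ?_
  rintro ⟨y, hy⟩
  obtain ⟨x, rfl⟩ := hπ y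
  exact ⟨⟨x, hy⟩, rfl⟩

include h_sum h_ext in
theorem gen_of_surjective_of_ker_mem {f : M →ₗ[A] N} (hf : Function.Surjective f)
    (hker : 𝒞 (ModuleCat.of A (LinearMap.ker f))) (hN : Gen 𝒞 (ModuleCat.of A N)) :
    Gen 𝒞 (ModuleCat.of A M) := by
  obtain ⟨S, s, hS, hs⟩ := exists_surjective_of_gen h_sum hN
  -- the pullback `M ×_N S`: an extension of `S` by `ker f`, mapping onto `M`
  set P := LinearMap.ker (f ∘ₗ LinearMap.fst A M S - s ∘ₗ LinearMap.snd A M S)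
  have mem_P (x : M) (z : S) : (x, z) ∈ P ↔ f x = s z := by simp [P, sub_eq_zero]
  let i : LinearMap.ker f →ₗ[A] P :=
    LinearMap.codRestrict P (LinearMap.inl A M S ∘ₗ (LinearMap.ker f).subtype)
      fun x => (mem_P _ _).2 (by simp)
  let p : P →ₗ[A] S := LinearMap.snd A M S ∘ₗ P.subtype
  have hP : 𝒞 (ModuleCat.of A P) := by
    refine h_ext (ModuleCat.of A (LinearMap.ker f)) (ModuleCat.of A P) S i p ?_ ?_ ?_ hker hS
    · intro x y hxy
      exact Subtype.ext (congrArg (fun z : P => (z : M × S).1) hxy)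
    · intro z
      obtain ⟨x, hx⟩ := hf (s z)
      exact ⟨⟨(x, z), (mem_P x z).2 hx⟩, rfl⟩
    · ext w
      constructor
      · rintro ⟨y, rfl⟩
        rfl
      · obtain ⟨⟨x, z⟩, hxz⟩ := w
        rintro (rfl : z = 0)
        exact ⟨⟨x, by simpa using (mem_P x 0).1 hxz⟩, rfl⟩
  refine (gen_of_mem hP).of_surjective (LinearMap.fst A M S ∘ₗ P.subtype) fun x => ?_
  obtain ⟨z, hz⟩ := hs (f x)
  exact ⟨⟨(x, z), (mem_P x z).2 hz.symm⟩, rfl⟩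

include h_iso h_sum h_ext in
theorem gen_of_mem_of_subquotient {a b : Submodule A M} (hab : a ≤ b) (ha : 𝒞 (ModuleCat.of A a))
    (hba : Gen 𝒞 (ModuleCat.of A (Subquotient a b))) : Gen 𝒞 (ModuleCat.of A b) := by
  refine gen_of_surjective_of_ker_mem h_sum h_ext (Submodule.mkQ_surjective _) ?_ hba
  rw [Submodule.ker_mkQ]
  exact h_iso.of_equiv (Submodule.comapSubtypeEquivOfLe hab).symm ha

theorem Gen.subquotient_map (g : M →ₗ[A] X) {a b : Submodule A M}
    (h : Gen 𝒞 (ModuleCat.of A (Subquotient a b))) :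
    Gen 𝒞 (ModuleCat.of A (Subquotient (a.map g) (b.map g))) := by
  refine h.of_surjective (Submodule.mapQ _ _ (g.submoduleMap b) ?_) ?_
  · intro x hx
    exact Submodule.mem_map_of_mem hx
  · intro y
    obtain ⟨y, rfl⟩ := Submodule.mkQ_surjective _ y
    obtain ⟨x, rfl⟩ := g.submoduleMap_surjective b y
    exact ⟨Submodule.mkQ _ x, rfl⟩

variable (𝒞) in
def RangesIn (X : Type u) [AddCommGroup X] [Module A X] : Prop :=
  ∀ (P : ModuleCat.{u} A) (f : P →ₗ[A] X), 𝒞 P → 𝒞 (ModuleCat.of A (LinearMap.range f))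

namespace RangesIn

include h_iso h_ker h_coker in
theorem of_mem (hX : 𝒞 (ModuleCat.of A X)) : RangesIn 𝒞 X :=
  fun _ f hP => range_mem h_iso h_ker h_coker f hP hX

include h_sum in
theorem range_mem_of_gen (hX : RangesIn 𝒞 X) (hN : Gen 𝒞 (ModuleCat.of A N)) (f : N →ₗ[A] X) :
    𝒞 (ModuleCat.of A (LinearMap.range f)) := by
  obtain ⟨P, π, hP, hπ⟩ := exists_surjective_of_gen h_sum hN
  rw [← LinearMap.range_comp_of_range_eq_top f (LinearMap.range_eq_top.2 hπ)]
  exact hX P _ hP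

include h_sum in
theorem iSup_mem (hX : RangesIn 𝒞 X) {ι : Type u} (N : ι → Submodule A X)
    (hN : ∀ i, 𝒞 (ModuleCat.of A (N i))) : 𝒞 (ModuleCat.of A ↥(⨆ i, N i)) := by
  classical
  rw [← DirectSum.range_coeLinearMap]
  exact hX _ _ (h_sum ι (fun i => ModuleCat.of A (N i)) hN)

include h_iso h_sum h_ext in
theorem map_mem_of_isFiltrationBy (hX : RangesIn 𝒞 X) {μ : Ordinal.{u}}
    {F : Ordinal.{u} → Submodule A M} (hF : IsFiltrationBy (Gen 𝒞) μ F) (g : M →ₗ[A] X) :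
    ∀ l ≤ μ, 𝒞 (ModuleCat.of A ((F l).map g)) := by
  refine continuousChain_induction (P := fun N : Submodule A M => 𝒞 (ModuleCat.of A (N.map g)))
    hF.zero hF.limit (fun ι N hN => ?_) fun l hl hFl => ?_
  · rw [Submodule.map_iSup]
    exact hX.iSup_mem h_sum _ hN
  · have hFl₁ : Gen 𝒞 (ModuleCat.of A ((F (l + 1)).map g)) :=
      gen_of_mem_of_subquotient h_iso h_sum h_ext (Submodule.map_mono (hF.mono le_self_add)) hFl
        ((hF.gen_factor hl).subquotient_map g)
    have := hX.range_mem_of_gen h_sum hFl₁ (Submodule.subtype _)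
    rwa [Submodule.range_subtype] at this

include h_iso h_sum h_ext in
theorem range_mem_of_filtGen (hX : RangesIn 𝒞 X) {Y : ModuleCat.{u} A}
    (hY : FiltGen 𝒞 Y) (g : Y →ₗ[A] X) : 𝒞 (ModuleCat.of A (LinearMap.range g)) := by
  obtain ⟨μ, F, hF⟩ := filt_iff.1 hY
  have := hX.map_mem_of_isFiltrationBy h_iso h_sum h_ext hF g μ le_rfl
  rwa [hF.top, Submodule.map_top] at this

include h_iso h_ker h_coker h_sum h_ext in
theorem of_aSub {X : ModuleCat.{u} A} (hX : aSub (FiltGen 𝒞) X) : RangesIn 𝒞 X := by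
  intro P f hP
  have hker : FiltGen 𝒞 (ModuleCat.of A (LinearMap.ker f)) :=
    hX.2 P f (filt_of_mem (gen_of_mem hP))
  have := (of_mem h_iso h_ker h_coker hP).range_mem_of_filtGen h_iso h_sum h_ext hker
    (LinearMap.ker f).subtype
  rw [Submodule.range_subtype] at this
  exact range_mem_of_ker_mem h_iso h_coker hP this

end RangesIn

theorem IsFiltrationBy.comap {𝒟 𝒟' : ModuleCat.{u} A → Prop} {μ : Ordinal.{u}}
    {F : Ordinal.{u} → Submodule A M} (hF : IsFiltrationBy 𝒟 μ F) {f : N →ₗ[A] M}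
    (hf : Function.Injective f)
    (hfactor : ∀ l < μ, ∃ C : ModuleCat.{u} A, 𝒟' C ∧
      Nonempty (Subquotient ((F l).comap f) ((F (l + 1)).comap f) ≃ₗ[A] C)) :
    IsFiltrationBy 𝒟' μ fun ν => (F ν).comap f where
  mono _ _ h := Submodule.comap_mono (hF.mono h)
  zero := by rw [hF.zero, Submodule.comap_bot, LinearMap.ker_eq_bot.2 hf]
  top := by rw [hF.top, Submodule.comap_top]
  limit ν hν hlim := by
    have : Nonempty ν.ToType := Ordinal.nonempty_toType_iff.2 hlim.ne_bot
    rw [hF.limit ν hν hlim, Ordinal.iSup_lt_eq_iSup_toType, Ordinal.iSup_lt_eq_iSup_toType,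
      Submodule.comap_iSup_of_directed]
    exact (hF.mono.comp fun _ _ h => Ordinal.ToType.mk.symm.monotone h).directed_le
  factor := hfactor

def Subquotient.mapToQuotient (g : M →ₗ[A] X) (a b : Submodule A M) :
    Subquotient a b →ₗ[A] X ⧸ a.map g :=
  Submodule.mapQ _ _ (g ∘ₗ b.subtype) fun _ hx => Submodule.mem_map_of_mem hx

theorem Subquotient.mapToQuotient_mk (g : M →ₗ[A] X) (a b : Submodule A M) (z : b) :
    mapToQuotient g a b (Submodule.Quotient.mk z) = Submodule.Quotient.mk (g z) :=
  rfl

noncomputable def Subquotient.comapKerEquiv (g : M →ₗ[A] X) {a b : Submodule A M} (hab : a ≤ b) :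
    Subquotient (a.comap (LinearMap.ker g).subtype) (b.comap (LinearMap.ker g).subtype) ≃ₗ[A]
      LinearMap.ker (mapToQuotient g a b) := by
  let k := LinearMap.ker g
  let c := b.comap k.subtype
  let ψ : c →ₗ[A] LinearMap.ker (mapToQuotient g a b) :=
    LinearMap.codRestrict _ ((a.comap b.subtype).mkQ ∘ₗ k.subtype.restrict fun _ hx => hx)
      fun x => by
        rw [LinearMap.mem_ker, LinearMap.comp_apply, Submodule.mkQ_apply, mapToQuotient_mk]
        exact (Submodule.Quotient.mk_eq_zero _).2 (by simp)
  have hψ : Function.Surjective ψ := by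
    rintro ⟨y, hy⟩
    obtain ⟨z, rfl⟩ := Submodule.mkQ_surjective _ y
    rw [LinearMap.mem_ker, Submodule.mkQ_apply, mapToQuotient_mk,
      Submodule.Quotient.mk_eq_zero] at hy
    obtain ⟨w, hw, hwz⟩ := hy
    refine ⟨⟨⟨z - w, by simp [k, hwz]⟩, b.sub_mem z.2 (hab hw)⟩, Subtype.ext ?_⟩
    exact (Submodule.Quotient.eq _).2 (by simpa using hw)
  have hker : LinearMap.ker ψ = (a.comap k.subtype).comap c.subtype := by
    ext x
    rw [LinearMap.mem_ker, ← Subtype.coe_inj]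
    exact Submodule.Quotient.mk_eq_zero _
  exact (Submodule.quotEquivOfEq _ _ hker.symm).trans (ψ.quotKerEquivOfSurjective hψ)

include h_iso h_ker h_coker h_sum h_ext in
theorem filtGen_ker (hX : 𝒞 (ModuleCat.of A X)) {Y : ModuleCat.{u} A} (hY : FiltGen 𝒞 Y)
    (g : Y →ₗ[A] X) : FiltGen 𝒞 (ModuleCat.of A (LinearMap.ker g)) := by
  obtain ⟨μ, F, hF⟩ := filt_iff.1 hY
  refine filt_iff.2 ⟨μ, _, hF.comap (LinearMap.ker g).injective_subtype fun l hl => ?_⟩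
  have hFl : 𝒞 (ModuleCat.of A ((F l).map g)) :=
    (RangesIn.of_mem h_iso h_ker h_coker hX).map_mem_of_isFiltrationBy h_iso h_sum h_ext hF g l
      hl.le
  exact ⟨_, gen_ker h_ker h_sum _ (hF.gen_factor hl) (quotient_mem h_iso h_coker hX hFl),
    ⟨Subquotient.comapKerEquiv g (hF.mono le_self_add)⟩⟩

end Modules

/-- If `𝒞` is closed under isomorphisms, kernels, cokernels, direct sums and
extensions, then `𝔞(FiltGen 𝒞) = 𝒞`. -/
theorem stmt3 {A : Type u} [Ring A] (𝒞 : ModuleCat.{u} A → Prop)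
    (h_iso : IsoClosed 𝒞) (h_ker : ClosedUnderKernels 𝒞) (h_coker : ClosedUnderCokernels 𝒞)
    (h_sum : ClosedUnderDirectSums 𝒞) (h_ext : ClosedUnderExtensions 𝒞) :
    aSub (FiltGen 𝒞) = 𝒞 := by
  funext X
  refine propext ⟨fun hX => ?_, fun hX => ⟨filt_of_mem (gen_of_mem hX),
    fun Y g hY => filtGen_ker h_iso h_ker h_coker h_sum h_ext hX hY g⟩⟩
  have := (RangesIn.of_aSub h_iso h_ker h_coker h_sum h_ext hX).range_mem_of_filtGen h_iso h_sum
    h_ext hX.1 LinearMap.id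
  rw [LinearMap.range_id] at this
  exact h_iso.of_equiv Submodule.topEquiv this
end

section
/- Let A be a ring and let 𝒞 be a class of right A-modules, closed under isomorphisms, that is closed under kernels of homomorphisms between modules in 𝒞 and under arbitrary direct sums. If X ∈ Gen 𝒞 and f : X → C is a surjective homomorphism with C ∈ 𝒞, then Ker f ∈ Gen 𝒞. -/
universe u

open DirectSum

/-! Pulling `f` back along a surjection `g : ⨁ Mᵢ → X` with all `Mᵢ ∈ 𝒞` gives
`Ker (f ∘ g) ∈ 𝒞`, as the kernel of a map between the members `⨁ Mᵢ` and `C` of `𝒞`;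
and `g` maps `Ker (f ∘ g)` onto `Ker f`. -/

namespace Gen

variable {A : Type u} [Ring A] {𝒞 : ModuleCat.{u} A → Prop}

theorem of_surjective_s4 {M N : ModuleCat.{u} A} (hM : 𝒞 M) (p : M →ₗ[A] N)
    (hp : Function.Surjective p) : Gen 𝒞 N := by
  refine ⟨PUnit, fun _ => M, DirectSum.toModule A PUnit N fun _ => p, fun _ => hM, ?_⟩
  intro y
  obtain ⟨x, rfl⟩ := hp y
  exact ⟨DirectSum.lof A PUnit (fun _ => (M : Type u)) PUnit.unit x, DirectSum.toModule_lof ..⟩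

end Gen

theorem stmt4_general {A : Type u} [Ring A] (𝒞 : ModuleCat.{u} A → Prop)
    (h_ker : ClosedUnderKernels 𝒞) (h_sum : ClosedUnderDirectSums 𝒞)
    (X C : ModuleCat.{u} A) (hX : Gen 𝒞 X) (hC : 𝒞 C)
    (f : X →ₗ[A] C) :
    Gen 𝒞 (ModuleCat.of A (LinearMap.ker f)) := by
  obtain ⟨ι, M, g, hM, hg⟩ := hX
  have hK : 𝒞 (ModuleCat.of A (LinearMap.ker (f.comp g))) :=
    h_ker (ModuleCat.of A (⨁ i, (M i : Type u))) C (f.comp g) (h_sum ι M hM) hC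
  -- `ker (f.comp g)` is `(ker f).comap g` by definition (`LinearMap.ker_comp`).
  exact Gen.of_surjective_s4 hK (g.submoduleComap (LinearMap.ker f))
    (g.submoduleComap_surjective_of_surjective _ hg)

/-- If `𝒞` is closed under isomorphisms, kernels and direct sums, `X ∈ Gen 𝒞`
and `f : X → C` is surjective with `C ∈ 𝒞`, then `Ker f ∈ Gen 𝒞`. -/
theorem stmt4 {A : Type u} [Ring A] (𝒞 : ModuleCat.{u} A → Prop)
    (h_iso : IsoClosed 𝒞) (h_ker : ClosedUnderKernels 𝒞) (h_sum : ClosedUnderDirectSums 𝒞)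
    (X C : ModuleCat.{u} A) (hX : Gen 𝒞 X) (hC : 𝒞 C)
    (f : X →ₗ[A] C) (hf : Function.Surjective f) :
    Gen 𝒞 (ModuleCat.of A (LinearMap.ker f)) :=
  stmt4_general 𝒞 h_ker h_sum X C hX hC f
end

section
/- Let A be a ring and let T be a silting right A-module such that every module in Add T admits a minimal projective presentation. Then for every exact sequence A →f→ T₀ → T₁ → 0 with T₀ and T₁ in Add T and f a left Add T-approximation of A, the module T₁ is partial silting with respect to some projective presentation σ₁ satisfying 𝒟_{σ₁} = Gen T. -/
universe u

open DirectSum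

/-!
Let `σ` be a silting presentation of `T`, take a minimal presentation `σ₀ : P₀ → Q₀` of `T₀` and
lift `f` to `ℓ : A → Q₀`; then `σ₁ = (σ₀, ℓ) : P₀ ⊕ A → Q₀` presents `T₁ = coker f`.

Since `T₀` is a summand of some `T^(I)`, comparing `σ₀` with `σ^(I)` in both directions gives an
endomorphism of `σ₀` over the identity of `T₀`; minimality makes it invertible, so `σ₀` is a
retract of `σ^(I)` and `Gen T = 𝒟_σ = 𝒟_{σ^(I)} ⊆ 𝒟_{σ₀}`.

If `X ∈ 𝒟_{σ₁}`, extending `(0, x) : P₀ ⊕ A → X` along `σ₁` yields a map `T₀ → X` sending `f 1`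
to `x`, so `X ∈ Gen T`. Conversely, for `X ∈ Gen T` a map `P₀ ⊕ A → X` extends along `σ₀` on
`P₀`, and the defect on `A` lifts to some `T^(J) ↠ X` and then factors through the approximation
`f`. Hence `𝒟_{σ₁} = Gen T`, a torsion class since `𝒟_σ` is closed under extensions.
-/

open LinearMap

section

variable {A : Type u} [Ring A]

section LinearAlgebra

variable {M N P : Type u} [AddCommGroup M] [AddCommGroup N] [AddCommGroup P]
  [Module A M] [Module A N] [Module A P]

instance Module.Projective.finsupp {I : Type u} [Module.Projective A P] :
    Module.Projective A (I →₀ P) := by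
  classical exact .of_equiv' (finsuppLequivDFinsupp A).symm

theorem LinearMap.exists_comp_eq_of_range_le [Module.Projective A P] (f : M →ₗ[A] N)
    (g : P →ₗ[A] N) (h : range g ≤ range f) : ∃ g' : P →ₗ[A] M, f ∘ₗ g' = g := by
  obtain ⟨g', hg'⟩ := Module.projective_lifting_property f.rangeRestrict
    (g.codRestrict (range f) fun x => h (mem_range_self g x)) f.surjective_rangeRestrict
  exact ⟨g', by ext x; exact congr(Subtype.val ($hg' x))⟩

theorem LinearMap.exists_comp_eq_of_ker_le (π : M →ₗ[A] N) (hπ : Function.Surjective π)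
    (η : M →ₗ[A] P) (h : ker π ≤ ker η) : ∃ v : N →ₗ[A] P, v ∘ₗ π = η :=
  ⟨(ker π).liftQ η h ∘ₗ (π.quotKerEquivOfSurjective hπ).symm.toLinearMap, by
    ext m; simp [quotKerEquivOfSurjective_symm_apply]⟩

theorem Finsupp.range_mapRange_linearMap_eq_ker {σ : M →ₗ[A] N} {π : N →ₗ[A] P}
    (hex : range σ = ker π) (I : Type u) :
    range (Finsupp.mapRange.linearMap (α := I) σ) = ker (Finsupp.mapRange.linearMap π) := by
  rw [Finsupp.ker_mapRange, ← hex]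
  refine le_antisymm ?_ ?_
  · rintro _ ⟨y, rfl⟩
    exact (Finsupp.mem_submodule_iff _ _).2 fun i => ⟨y i, rfl⟩
  · rw [Finsupp.submodule_eq_iSup, iSup_le_iff]
    rintro i _ ⟨_, ⟨p, rfl⟩, rfl⟩
    exact ⟨Finsupp.single i p, by simp⟩

theorem LinearMap.range_coprod_eq_ker_comp {Q L : Type u} [AddCommGroup Q] [AddCommGroup L]
    [Module A Q] [Module A L] {σ : P →ₗ[A] Q} {π : Q →ₗ[A] M} (hex : range σ = ker π)
    (ℓ : L →ₗ[A] Q) {g : M →ₗ[A] N} (hℓ : range (π ∘ₗ ℓ) = ker g) :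
    range (σ.coprod ℓ) = ker (g ∘ₗ π) := by
  rw [range_coprod, hex, ker_comp, ← hℓ, range_comp, Submodule.comap_map_eq, sup_comm]

end LinearAlgebra

theorem bijective_of_ker_le_superfluous {M : ModuleCat.{u} A} [Module.Projective A M]
    {N : Submodule A M} (hN : IsSuperfluous N) (c : M →ₗ[A] M) (hrange : range c ⊔ N = ⊤)
    (hker : ker c ≤ N) : Function.Bijective c := by
  have hc : Function.Surjective c := range_eq_top.1 (hN _ hrange)
  obtain ⟨t, ht⟩ := Module.projective_lifting_property c LinearMap.id hc
  have hct : Function.LeftInverse c t := LinearMap.congr_fun ht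
  have ht : Function.Surjective t := range_eq_top.1 <| hN _ <|
    (Submodule.sup_eq_top_iff _ _).2 fun q =>
      ⟨t (c q), mem_range_self t _, q - t (c q), hker (by simp [hct (c q)]), by abel⟩
  exact ⟨(hct.rightInverse_of_surjective ht).injective, hc⟩

namespace ProjPres

variable {M N : ModuleCat.{u} A}

theorem π_comp_σ (pp : ProjPres M) : pp.π ∘ₗ pp.σ = 0 :=
  range_le_ker_iff.1 pp.exact.le

noncomputable def finsupp (pp : ProjPres M) (I : Type u) : ProjPres (ModuleCat.of A (I →₀ M)) where
  P := ModuleCat.of A (I →₀ pp.P)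
  Q := ModuleCat.of A (I →₀ pp.Q)
  σ := Finsupp.mapRange.linearMap pp.σ
  π := Finsupp.mapRange.linearMap pp.π
  projP := have := pp.projP; inferInstance
  projQ := have := pp.projQ; inferInstance
  exact := Finsupp.range_mapRange_linearMap_eq_ker pp.exact I
  surj := Finsupp.mapRange_surjective _ (map_zero _) pp.surj

def cokernel (pp : ProjPres M) {L : Type u} [AddCommGroup L] [Module A L]
    [Module.Projective A L] (ℓ : L →ₗ[A] pp.Q) (g : M →ₗ[A] N) (hg : Function.Surjective g)
    (hℓ : range (pp.π ∘ₗ ℓ) = ker g) : ProjPres N where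
  P := ModuleCat.of A (pp.P × L)
  Q := pp.Q
  σ := pp.σ.coprod ℓ
  π := g ∘ₗ pp.π
  projP := have := pp.projP; inferInstance
  projQ := pp.projQ
  exact := range_coprod_eq_ker_comp pp.exact ℓ hℓ
  surj := hg.comp pp.surj

theorem exists_lift (pp : ProjPres M) (pp' : ProjPres N) (h : M →ₗ[A] N) :
    ∃ (a : pp.Q →ₗ[A] pp'.Q) (a' : pp.P →ₗ[A] pp'.P),
      pp'.π ∘ₗ a = h ∘ₗ pp.π ∧ pp'.σ ∘ₗ a' = a ∘ₗ pp.σ := by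
  have := pp.projP
  have := pp.projQ
  obtain ⟨a, ha⟩ := Module.projective_lifting_property pp'.π (h ∘ₗ pp.π) pp'.surj
  obtain ⟨a', ha'⟩ := pp'.σ.exists_comp_eq_of_range_le (a ∘ₗ pp.σ) <| by
    rw [pp'.exact, range_le_ker_iff, ← LinearMap.comp_assoc, ha, LinearMap.comp_assoc,
      pp.π_comp_σ, comp_zero]
  exact ⟨a, a', ha, ha'⟩

theorem dclass_finsupp (pp : ProjPres M) {X : ModuleCat.{u} A} (hX : Dclass pp.σ X)
    (I : Type u) : Dclass (pp.finsupp I).σ X := by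
  intro (φ : (I →₀ pp.P) →ₗ[A] X)
  choose η hη using fun i => hX (φ ∘ₗ Finsupp.lsingle i)
  refine ⟨Finsupp.lsum ℕ η, ?_⟩
  change Finsupp.lsum ℕ η ∘ₗ Finsupp.mapRange.linearMap pp.σ = φ
  exact Finsupp.lhom_ext fun i p => by simpa using LinearMap.congr_fun (hη i) p

end ProjPres

theorem IsMinimalPres.bijective_of_comm {M : ModuleCat.{u} A} {pp : ProjPres M}
    (hm : IsMinimalPres pp) {c : pp.Q →ₗ[A] pp.Q} {c' : pp.P →ₗ[A] pp.P}
    (hπ : pp.π ∘ₗ c = pp.π) (hσ : pp.σ ∘ₗ c' = c ∘ₗ pp.σ) : Function.Bijective c' := by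
  have := pp.projP
  have := pp.projQ
  have hπc : ∀ q, pp.π (c q) = pp.π q := LinearMap.congr_fun hπ
  have hσc : ∀ p, pp.σ (c' p) = c (pp.σ p) := LinearMap.congr_fun hσ
  have hc : Function.Bijective c := bijective_of_ker_le_superfluous hm.1 c
    ((Submodule.sup_eq_top_iff _ _).2 fun q =>
      ⟨c q, mem_range_self c q, q - c q, by simp [hπc], by abel⟩)
    (fun q hq => by simpa [hπc] using congrArg pp.π hq)
  refine bijective_of_ker_le_superfluous hm.2 c'
    ((Submodule.sup_eq_top_iff _ _).2 fun p => ?_) (fun p hp => hc.1 ?_)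
  -- `c` is an automorphism of `Q` over `M`, so it maps `range σ = ker π` onto itself.
  · obtain ⟨q, hq⟩ := hc.2 (pp.σ p)
    obtain ⟨p', rfl⟩ : q ∈ range pp.σ := by
      rw [pp.exact, mem_ker, ← hπc, hq, ← LinearMap.comp_apply, pp.π_comp_σ, LinearMap.zero_apply]
    exact ⟨c' p', mem_range_self c' p', p - c' p', by simp [hσc, hq], by abel⟩
  · simpa [hσc] using congrArg pp.σ hp

section Dclass

variable {P Q P' Q' X : ModuleCat.{u} A}

theorem dclass_of_retract {σ : P →ₗ[A] Q} {σ' : P' →ₗ[A] Q'} (a : Q' →ₗ[A] Q)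
    (a' : P' →ₗ[A] P) (r : P →ₗ[A] P') (hcomm : σ ∘ₗ a' = a ∘ₗ σ')
    (hr : r ∘ₗ a' = LinearMap.id) (hX : Dclass σ X) : Dclass σ' X := by
  intro φ
  obtain ⟨ζ, hζ⟩ := hX (φ ∘ₗ r)
  refine ⟨ζ ∘ₗ a, ?_⟩
  dsimp only at hζ ⊢
  rw [LinearMap.comp_assoc, ← hcomm, ← LinearMap.comp_assoc, hζ, LinearMap.comp_assoc, hr,
    comp_id]

theorem closedUnderExtensions_dclass [Module.Projective A P] [Module.Projective A Q]
    (σ : P →ₗ[A] Q) : ClosedUnderExtensions (Dclass σ) := by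
  intro X Y Z f g _ hg hfg hX hZ φ
  obtain ⟨ζ, hζ⟩ := hZ (g ∘ₗ φ)
  obtain ⟨η, hη⟩ := Module.projective_lifting_property g ζ hg
  dsimp only at hζ
  obtain ⟨θ, hθ⟩ := f.exists_comp_eq_of_range_le (φ - η ∘ₗ σ) <| by
    rw [hfg, range_le_ker_iff, comp_sub, ← LinearMap.comp_assoc, hη, hζ, sub_self]
  obtain ⟨θ', hθ'⟩ := hX θ
  refine ⟨η + f ∘ₗ θ', ?_⟩
  dsimp only at hθ' ⊢
  rw [add_comp, LinearMap.comp_assoc, hθ', hθ, add_sub_cancel]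

end Dclass

theorem IsMinimalPres.dclass_of_memAdd {T T₀ X : ModuleCat.{u} A} (pp : ProjPres T)
    (hT₀ : memAdd T T₀) {pp₀ : ProjPres T₀} (hm : IsMinimalPres pp₀) (hX : Dclass pp.σ X) :
    Dclass pp₀.σ X := by
  obtain ⟨I, i, r, hri⟩ := hT₀
  obtain ⟨a, a', hπa, hσa⟩ := pp₀.exists_lift (pp.finsupp I) i
  obtain ⟨b, b', hπb, hσb⟩ := (pp.finsupp I).exists_lift pp₀ r
  have hc : Function.Bijective (b' ∘ₗ a') := hm.bijective_of_comm (c := b ∘ₗ a)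
    (by rw [← LinearMap.comp_assoc, hπb, LinearMap.comp_assoc, hπa, ← LinearMap.comp_assoc, hri,
      id_comp])
    (by rw [← LinearMap.comp_assoc, hσb, LinearMap.comp_assoc, hσa, LinearMap.comp_assoc])
  let e := LinearEquiv.ofBijective _ hc
  refine dclass_of_retract a a' (e.symm.toLinearMap ∘ₗ b') hσa ?_ (pp.dclass_finsupp hX I)
  ext p
  exact e.symm_apply_apply p

section GenM

variable (T : ModuleCat.{u} A)

theorem closedUnderQuotients_genM : ClosedUnderQuotients (GenM T) :=
  fun _ _ f hf ⟨ι, q, hq⟩ => ⟨ι, f ∘ₗ q, hf.comp hq⟩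

theorem isoClosed_genM : IsoClosed (GenM T) :=
  fun M N e => closedUnderQuotients_genM T M N e e.surjective

theorem closedUnderDirectSums_genM : ClosedUnderDirectSums (GenM T) := by
  intro ι M hM
  choose κ p hp using hM
  exact ⟨Σ i, κ i, DirectSum.lmap p ∘ₗ (sigmaFinsuppLequivDFinsupp A).toLinearMap,
    ((DirectSum.lmap_surjective p).2 hp).comp (LinearEquiv.surjective _)⟩

variable {T}

theorem genM_of_memAdd {X : ModuleCat.{u} A} (hX : memAdd T X) : GenM T X :=
  let ⟨ι, i, r, hri⟩ := hX
  ⟨ι, r, fun x => ⟨i x, LinearMap.congr_fun hri x⟩⟩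

theorem genM_of_forall_mem_range {M X : ModuleCat.{u} A} (hM : GenM T M)
    (h : ∀ x : X, ∃ v : M →ₗ[A] X, x ∈ range v) : GenM T X := by
  classical
  choose v hv using h
  refine closedUnderQuotients_genM T _ X (DirectSum.toModule A X X v) (fun x => ?_)
    (closedUnderDirectSums_genM T X (fun _ => M) fun _ => hM)
  obtain ⟨m, hm⟩ := hv x
  exact ⟨DirectSum.lof A X (fun _ => M) x m, by simp [hm]⟩

theorem IsSilting.isTorsionClass_genM (hT : IsSilting T) : IsTorsionClass (GenM T) := by
  obtain ⟨pp, hD⟩ := hT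
  have := pp.projP
  have := pp.projQ
  exact ⟨isoClosed_genM T, closedUnderQuotients_genM T, hD ▸ closedUnderExtensions_dclass pp.σ,
    closedUnderDirectSums_genM T⟩

end GenM

section Cokernel

variable {T M X : ModuleCat.{u} A} (pp : ProjPres M) (ℓ : A →ₗ[A] pp.Q)

theorem genM_of_dclass_coprod (hM : GenM T M)
    (hX : Dclass (P := ModuleCat.of A (pp.P × A)) (pp.σ.coprod ℓ) X) : GenM T X := by
  refine genM_of_forall_mem_range hM fun x => ?_
  obtain ⟨η, hη⟩ := hX (coprod 0 (toSpanSingleton A X x))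
  have hησ : η ∘ₗ pp.σ = 0 := by
    simpa [LinearMap.comp_assoc] using congr($hη ∘ₗ inl A pp.P A)
  have hηℓ : η (ℓ 1) = x := by simpa using LinearMap.congr_fun hη (0, 1)
  obtain ⟨v, hv⟩ := pp.π.exists_comp_eq_of_ker_le pp.surj η <| by
    rw [← pp.exact, range_le_ker_iff, hησ]
  exact ⟨v, pp.π (ℓ 1), by rw [← LinearMap.comp_apply, hv, hηℓ]⟩

theorem dclass_coprod_of_genM (hD : ∀ X, GenM T X → Dclass pp.σ X)
    {f : ModuleCat.of A A →ₗ[A] M} (hf : IsLeftAddApprox T f) (hℓ : pp.π ∘ₗ ℓ = f)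
    (hX : GenM T X) : Dclass (P := ModuleCat.of A (pp.P × A)) (pp.σ.coprod ℓ) X := by
  intro χ
  obtain ⟨η, hη⟩ := hD X hX (χ ∘ₗ inl A pp.P A)
  obtain ⟨J, p, hp⟩ := hX
  obtain ⟨w, hw⟩ := Module.projective_lifting_property p (χ ∘ₗ inr A pp.P A - η ∘ₗ ℓ) hp
  obtain ⟨h, hh⟩ := hf.2 (ModuleCat.of A (J →₀ T)) ⟨J, .id, .id, id_comp _⟩ w
  dsimp only at hη
  refine ⟨η + p ∘ₗ h ∘ₗ pp.π, prod_ext ?_ ?_⟩ <;>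
    simp only [LinearMap.comp_assoc, coprod_inl, coprod_inr, add_comp]
  · rw [pp.π_comp_σ, comp_zero, comp_zero, add_zero, hη]
  · rw [hℓ, hh, hw, add_sub_cancel]

end Cokernel

end

theorem stmt6_general {A : Type u} [Ring A] (T : ModuleCat.{u} A) (hT : IsSilting T)
    (hmin : ∀ X : ModuleCat.{u} A, memAdd T X → ∃ pp : ProjPres X, IsMinimalPres pp)
    (T₀ T₁ : ModuleCat.{u} A) (hT₀ : memAdd T T₀)
    (f : ModuleCat.of A A →ₗ[A] T₀) (g : T₀ →ₗ[A] T₁)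
    (hg : Function.Surjective g) (hexact : LinearMap.range f = LinearMap.ker g)
    (happrox : IsLeftAddApprox T f) :
    ∃ pp₁ : ProjPres T₁, IsPartialSiltingWrt pp₁ ∧ Dclass pp₁.σ = GenM T := by
  have htors := hT.isTorsionClass_genM
  obtain ⟨pp, hD⟩ := hT
  obtain ⟨pp₀, hm⟩ := hmin T₀ hT₀
  obtain ⟨q₀, hq₀⟩ := pp₀.surj (f 1)
  let ℓ := toSpanSingleton A pp₀.Q q₀
  have hℓ : pp₀.π ∘ₗ ℓ = f := ext_ring (by simpa [ℓ] using hq₀)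
  let pp₁ := pp₀.cokernel ℓ g hg (hℓ ▸ hexact)
  have hD₀ : ∀ X, GenM T X → Dclass pp₀.σ X := fun X hX => hm.dclass_of_memAdd pp hT₀ (hD ▸ hX)
  have hD₁ : Dclass pp₁.σ = GenM T := funext fun X => propext
    ⟨genM_of_dclass_coprod pp₀ ℓ (genM_of_memAdd hT₀),
      dclass_coprod_of_genM pp₀ ℓ hD₀ happrox hℓ⟩
  exact ⟨pp₁, ⟨hD₁ ▸ htors, hD₁ ▸ closedUnderQuotients_genM T T₀ T₁ g hg (genM_of_memAdd hT₀)⟩,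
    hD₁⟩

/-- If `T` is silting and every module in `Add T` admits a minimal projective
presentation, then in every exact sequence `A →f→ T₀ → T₁ → 0` with `T₀, T₁ ∈ Add T` and
`f` a left `Add T`-approximation, `T₁` is partial silting w.r.t. a presentation `σ₁` with
`𝒟_{σ₁} = Gen T`. -/
theorem stmt6 {A : Type u} [Ring A] (T : ModuleCat.{u} A) (hT : IsSilting T)
    (hmin : ∀ X : ModuleCat.{u} A, memAdd T X → ∃ pp : ProjPres X, IsMinimalPres pp)
    (T₀ T₁ : ModuleCat.{u} A) (hT₀ : memAdd T T₀) (hT₁ : memAdd T T₁)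
    (f : ModuleCat.of A A →ₗ[A] T₀) (g : T₀ →ₗ[A] T₁)
    (hg : Function.Surjective g) (hexact : LinearMap.range f = LinearMap.ker g)
    (happrox : IsLeftAddApprox T f) :
    ∃ pp₁ : ProjPres T₁, IsPartialSiltingWrt pp₁ ∧ Dclass pp₁.σ = GenM T :=
  stmt6_general T hT hmin T₀ T₁ hT₀ f g hg hexact happrox
end

section
/- Let A be a ring and let M be a right A-module that admits both a minimal projective presentation p : P₁ → P₀ (with coker p ≅ M) and some presilting presentation. Then p is itself a presilting presentation of M. -/
universe u

open DirectSum

/-!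
Comparison maps between two projective presentations of `M` exist in both directions. Their
composite `h` is a chain endomorphism of the minimal presentation `p` lifting `id_M`; since
both `P₀ → M` and `P₁ → Ker(P₀ → M)` have superfluous kernels, `h` is an automorphism. Hence
the comparison map `p → q` is a split monomorphism in degree one, and the extension property
defining `𝒟_σ` transfers from `q` to `p`.
-/

variable {A : Type u} [Ring A]

namespace ProjPres

theorem exists_chainMap {M : ModuleCat.{u} A} (p q : ProjPres M) :
    ∃ (f₀ : p.Q →ₗ[A] q.Q) (f₁ : p.P →ₗ[A] q.P),
      q.π ∘ₗ f₀ = p.π ∧ q.σ ∘ₗ f₁ = f₀ ∘ₗ p.σ := by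
  have := p.projP; have := p.projQ
  obtain ⟨f₀, hf₀⟩ := Module.projective_lifting_property q.π p.π q.surj
  have hmem : ∀ x, f₀ (p.σ x) ∈ LinearMap.range q.σ := by
    intro x
    rw [q.exact, LinearMap.mem_ker, ← LinearMap.comp_apply, hf₀, ← LinearMap.mem_ker, ← p.exact]
    exact LinearMap.mem_range_self _ x
  obtain ⟨f₁, hf₁⟩ := Module.projective_lifting_property q.σ.rangeRestrict
    ((f₀ ∘ₗ p.σ).codRestrict _ hmem) q.σ.surjective_rangeRestrict
  refine ⟨f₀, f₁, hf₀, ?_⟩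
  ext x
  exact congrArg Subtype.val (LinearMap.congr_fun hf₁ x)

end ProjPres

theorem surjective_of_isSuperfluous_ker {Q : ModuleCat.{u} A} {N : Type*} [AddCommGroup N]
    [Module A N] {π : Q →ₗ[A] N} (hker : IsSuperfluous (LinearMap.ker π)) {k : Q →ₗ[A] Q}
    (hk : Function.Surjective (π ∘ₗ k)) : Function.Surjective k := by
  rw [← LinearMap.range_eq_top]
  apply hker
  rw [← Submodule.comap_map_eq, ← LinearMap.range_comp, LinearMap.range_eq_top.2 hk,
    Submodule.comap_top]

theorem bijective_of_comp_eq_comp_of_isSuperfluous_ker {Q : ModuleCat.{u} A}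
    [Module.Projective A Q] {N : Type*} [AddCommGroup N] [Module A N] {π : Q →ₗ[A] N}
    (hπ : Function.Surjective π) (hker : IsSuperfluous (LinearMap.ker π)) (u : N ≃ₗ[A] N)
    {h : Q →ₗ[A] Q} (hh : π ∘ₗ h = u.toLinearMap ∘ₗ π) : Function.Bijective h := by
  have hsurj : Function.Surjective h :=
    surjective_of_isSuperfluous_ker hker (hh ▸ u.surjective.comp hπ)
  obtain ⟨s, hs⟩ := Module.projective_lifting_property h LinearMap.id hsurj
  have hπs : π ∘ₗ s = u.symm.toLinearMap ∘ₗ π := by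
    ext x
    show π (s x) = u.symm (π x)
    exact u.eq_symm_apply.2
      ((LinearMap.congr_fun hh (s x)).symm.trans (congrArg π (LinearMap.congr_fun hs x)))
  have hs_surj : Function.Surjective s :=
    surjective_of_isSuperfluous_ker hker (hπs ▸ u.symm.surjective.comp hπ)
  have hinv : Function.LeftInverse h s := LinearMap.congr_fun hs
  exact ⟨(hinv.rightInverse_of_surjective hs_surj).injective, hsurj⟩

theorem IsMinimalPres.bijective_of_comp_eq {M : ModuleCat.{u} A} {p : ProjPres M}
    (hmin : IsMinimalPres p) {h₀ : p.Q →ₗ[A] p.Q} {h₁ : p.P →ₗ[A] p.P}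
    (hπ : p.π ∘ₗ h₀ = p.π) (hσ : p.σ ∘ₗ h₁ = h₀ ∘ₗ p.σ) : Function.Bijective h₁ := by
  have := p.projP; have := p.projQ
  let e₀ := LinearEquiv.ofBijective h₀
    (bijective_of_comp_eq_comp_of_isSuperfluous_ker p.surj hmin.1 (LinearEquiv.refl A M) hπ)
  have hπe₀ : p.π ∘ₗ e₀.symm.toLinearMap = p.π := by
    ext x
    conv_rhs => rw [← e₀.apply_symm_apply x]
    exact (LinearMap.congr_fun hπ _).symm
  have hker : (LinearMap.ker p.π).map e₀.toLinearMap = LinearMap.ker p.π := by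
    rw [Submodule.map_equiv_eq_comap_symm, ← LinearMap.ker_comp, hπe₀]
  let σ' : p.P →ₗ[A] LinearMap.ker p.π :=
    p.σ.codRestrict _ fun x => p.exact ▸ LinearMap.mem_range_self p.σ x
  refine bijective_of_comp_eq_comp_of_isSuperfluous_ker (π := σ') ?_ ?_
    (e₀.ofSubmodules _ _ hker) ?_
  · rintro ⟨y, hy⟩
    rw [← p.exact] at hy
    obtain ⟨x, rfl⟩ := hy
    exact ⟨x, rfl⟩
  · rw [LinearMap.ker_codRestrict]
    exact hmin.2
  · ext x
    exact LinearMap.congr_fun hσ x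

theorem Dclass.of_comp_eq_comp_of_retraction {P Q P' Q' : ModuleCat.{u} A}
    {σ : P →ₗ[A] Q} {σ' : P' →ₗ[A] Q'} {f₀ : Q →ₗ[A] Q'} {f₁ : P →ₗ[A] P'}
    (hf : σ' ∘ₗ f₁ = f₀ ∘ₗ σ) {r : P' →ₗ[A] P} (hr : r ∘ₗ f₁ = LinearMap.id)
    {X : ModuleCat.{u} A} (hX : Dclass σ' X) : Dclass σ X := by
  intro φ
  obtain ⟨ψ, hψ⟩ := hX (φ ∘ₗ r)
  refine ⟨ψ ∘ₗ f₀, ?_⟩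
  change (ψ ∘ₗ f₀) ∘ₗ σ = φ
  have hψ : ψ ∘ₗ σ' = φ ∘ₗ r := hψ
  rw [LinearMap.comp_assoc, ← hf, ← LinearMap.comp_assoc, hψ, LinearMap.comp_assoc, hr,
    LinearMap.comp_id]

/-- If `M` admits a minimal projective presentation `p` and some presilting
presentation, then `p` is itself presilting. -/
theorem stmt7 {A : Type u} [Ring A] (M : ModuleCat.{u} A)
    (p : ProjPres M) (hmin : IsMinimalPres p)
    (hpre : ∃ q : ProjPres M, IsPresilting q) :
    IsPresilting p := by
  obtain ⟨q, hq⟩ := hpre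
  obtain ⟨f₀, f₁, hf₀, hf₁⟩ := p.exists_chainMap q
  obtain ⟨g₀, g₁, hg₀, hg₁⟩ := q.exists_chainMap p
  have hbij : Function.Bijective (g₁ ∘ₗ f₁) := hmin.bijective_of_comp_eq (h₀ := g₀ ∘ₗ f₀)
    (by rw [← LinearMap.comp_assoc, hg₀, hf₀])
    (by rw [← LinearMap.comp_assoc, hg₁, LinearMap.comp_assoc, hf₁, LinearMap.comp_assoc])
  let e := LinearEquiv.ofBijective _ hbij
  have hretr : (e.symm.toLinearMap ∘ₗ g₁) ∘ₗ f₁ = LinearMap.id := by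
    ext x
    exact e.symm_apply_apply x
  exact fun ι => Dclass.of_comp_eq_comp_of_retraction hf₁ hretr (hq ι)
end

section
/- Let A be a ring and let 𝒯 be a torsion class of right A-modules. Then the class 𝔞(𝒯) := {X ∈ 𝒯 : for every homomorphism g : Y → X with Y ∈ 𝒯, Ker g ∈ 𝒯} is closed under kernels and cokernels of homomorphisms between its modules and under extensions. -/
universe u

open DirectSum

/-!
Let `𝒯` be a torsion class and write `𝔞 = 𝔞(𝒯)`. A homomorphism from a module of `𝒯` into
`Ker f ⊆ M` has the same kernel as its composite into `M`, so `Ker f ∈ 𝔞` as soon as it lies in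
`𝒯`. For an extension `0 → X → Y → Z → 0` with `X, Z ∈ 𝔞` and `w : W → Y`, `W ∈ 𝒯`, the kernel
`K` of `W → Y → Z` lies in `𝒯`, and `w` restricted to `K` lands in `X` with kernel `Ker w`.
For the cokernel `π : N → N / Im f` and `g : Y → N / Im f`, `Y ∈ 𝒯`, the pullback of `g` and `π`
is an extension of `Y` by `Im f`, hence lies in `𝒯`, and the kernel of its projection to `N`
is `Ker g`.
-/

open Function LinearMap

section TorsionClasses

variable {A : Type u} [Ring A] {𝒯 : ModuleCat.{u} A → Prop}

theorem aSub.of_injective {X X' : ModuleCat.{u} A} (hX' : aSub 𝒯 X') {j : X →ₗ[A] X'}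
    (hj : Injective j) (hX : 𝒯 X) : aSub 𝒯 X := by
  refine ⟨hX, fun Y g hY => ?_⟩
  have key := hX'.2 Y (j ∘ₗ g) hY
  rwa [ker_comp_of_ker_eq_bot g (ker_eq_bot.2 hj)] at key

theorem aSub.ker_mem_of_range_le {X : ModuleCat.{u} A} (hX : aSub 𝒯 X) {V : Type u}
    [AddCommGroup V] [Module A V] {j : X →ₗ[A] V} (hj : Injective j) {Y : ModuleCat.{u} A}
    (hY : 𝒯 Y) {g : Y →ₗ[A] V} (hg : range g ≤ range j) : 𝒯 (ModuleCat.of A (ker g)) := by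
  have key := hX.2 Y ((LinearEquiv.ofInjective j hj).symm.toLinearMap ∘ₗ
    g.codRestrict _ fun y => hg ⟨y, rfl⟩) hY
  rwa [LinearEquiv.ker_comp, ker_codRestrict] at key

section Pullback

variable {Y N C : Type u} [AddCommGroup Y] [Module A Y] [AddCommGroup N] [Module A N]
  [AddCommGroup C] [Module A C] (g : Y →ₗ[A] C) (π : N →ₗ[A] C)

abbrev pullbackSubmodule : Submodule A (Y × N) :=
  eqLocus (g ∘ₗ fst A Y N) (π ∘ₗ snd A Y N)

theorem ClosedUnderExtensions.pullbackSubmodule_mem (hext : ClosedUnderExtensions 𝒯)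
    {π : N →ₗ[A] C} (hπ : Surjective π) (hkerπ : 𝒯 (ModuleCat.of A (ker π)))
    (hY : 𝒯 (ModuleCat.of A Y)) : 𝒯 (ModuleCat.of A (pullbackSubmodule g π)) := by
  let ι : ker π →ₗ[A] pullbackSubmodule g π :=
    codRestrict _ (inr A Y N ∘ₗ (ker π).subtype) fun x => by simp
  refine hext (.of A (ker π)) _ (.of A Y) ι (fst A Y N ∘ₗ (pullbackSubmodule g π).subtype)
    ?_ ?_ ?_ hkerπ hY
  · intro a b hab
    exact Subtype.ext (inr_injective (congrArg Subtype.val hab))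
  · intro y
    obtain ⟨n, hn⟩ := hπ (g y)
    exact ⟨⟨(y, n), hn.symm⟩, rfl⟩
  · ext ⟨⟨y, n⟩, hyn⟩
    simp only [mem_range, mem_ker]
    constructor
    · rintro ⟨x, hx⟩
      rw [← hx]; rfl
    · rintro rfl
      refine ⟨⟨n, ?_⟩, rfl⟩
      simpa using hyn.symm

theorem injective_fst_comp_ker_snd :
    Injective (fst A Y N ∘ₗ (pullbackSubmodule g π).subtype ∘ₗ
      (ker (snd A Y N ∘ₗ (pullbackSubmodule g π).subtype)).subtype) := by
  rintro ⟨⟨⟨y, n⟩, _⟩, hn⟩ ⟨⟨⟨y', n'⟩, _⟩, hn'⟩ (rfl : y = y')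
  obtain rfl : n = 0 := hn
  obtain rfl : n' = 0 := hn'
  rfl

theorem range_fst_comp_ker_snd :
    range (fst A Y N ∘ₗ (pullbackSubmodule g π).subtype ∘ₗ
      (ker (snd A Y N ∘ₗ (pullbackSubmodule g π).subtype)).subtype) = ker g := by
  ext y
  constructor
  · rintro ⟨⟨⟨⟨y, n⟩, hyn⟩, hn⟩, rfl⟩
    obtain rfl : n = 0 := hn
    simpa using hyn
  · intro hy
    exact ⟨⟨⟨(y, 0), by simpa using hy⟩, rfl⟩, rfl⟩

noncomputable def pullbackKerSndEquiv :
    ker (snd A Y N ∘ₗ (pullbackSubmodule g π).subtype) ≃ₗ[A] ker g :=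
  (LinearEquiv.ofInjective _ (injective_fst_comp_ker_snd g π)).trans
    (LinearEquiv.ofEq _ _ (range_fst_comp_ker_snd g π))

end Pullback

theorem aSub.ker_mem_of_surjective (hiso : IsoClosed 𝒯) (hext : ClosedUnderExtensions 𝒯)
    {N : ModuleCat.{u} A} (hN : aSub 𝒯 N) {C : Type u} [AddCommGroup C] [Module A C]
    {π : N →ₗ[A] C} (hπ : Surjective π) (hkerπ : 𝒯 (ModuleCat.of A (ker π)))
    {Y : ModuleCat.{u} A} (hY : 𝒯 Y) (g : Y →ₗ[A] C) : 𝒯 (ModuleCat.of A (ker g)) :=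
  hiso _ _ (pullbackKerSndEquiv g π) <|
    hN.2 _ (snd A Y N ∘ₗ (pullbackSubmodule g π).subtype) <|
      hext.pullbackSubmodule_mem g hπ hkerπ hY

theorem aSub_closedUnderKernels : ClosedUnderKernels (aSub 𝒯) :=
  fun M _ f hM hN => hM.of_injective (ker f).injective_subtype (hN.2 M f hM.1)

theorem aSub_closedUnderCokernels (hiso : IsoClosed 𝒯) (hquot : ClosedUnderQuotients 𝒯)
    (hext : ClosedUnderExtensions 𝒯) : ClosedUnderCokernels (aSub 𝒯) := by
  intro M N f hM hN
  have hkerπ : 𝒯 (ModuleCat.of A (ker (range f).mkQ)) := by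
    rw [Submodule.ker_mkQ]
    exact hquot M _ f.rangeRestrict f.surjective_rangeRestrict hM.1
  exact ⟨hquot N _ _ (range f).mkQ_surjective hN.1,
    fun Y g hY => hN.ker_mem_of_surjective hiso hext (range f).mkQ_surjective hkerπ hY g⟩

theorem aSub_closedUnderExtensions (hiso : IsoClosed 𝒯) (hext : ClosedUnderExtensions 𝒯) :
    ClosedUnderExtensions (aSub 𝒯) := by
  intro X Y Z f g hf hg hfg hX hZ
  refine ⟨hext X Y Z f g hf hg hfg hX.1 hZ.1, fun W w hW => ?_⟩
  let K := ker (g ∘ₗ w)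
  have hwK : range (w ∘ₗ K.subtype) ≤ range f := by
    rw [hfg, range_le_ker_iff, ← LinearMap.comp_assoc]
    exact comp_ker_subtype _
  have hkerwK := hX.ker_mem_of_range_le hf (hZ.2 W (g ∘ₗ w) hW) hwK
  exact hiso _ _ ((LinearEquiv.ofEq _ _ (ker_comp _ _)).trans
    (Submodule.comapSubtypeEquivOfLe (ker_le_ker_comp w g))) hkerwK

end TorsionClasses

/-- For a torsion class `𝒯`, the class `𝔞(𝒯)` is closed under kernels,
cokernels and extensions. -/
theorem stmt11 {A : Type u} [Ring A] (𝒯 : ModuleCat.{u} A → Prop)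
    (h𝒯 : IsTorsionClass 𝒯) :
    ClosedUnderKernels (aSub 𝒯) ∧ ClosedUnderCokernels (aSub 𝒯) ∧
      ClosedUnderExtensions (aSub 𝒯) := by
  obtain ⟨hiso, hquot, hext, -⟩ := h𝒯
  exact ⟨aSub_closedUnderKernels, aSub_closedUnderCokernels hiso hquot hext,
    aSub_closedUnderExtensions hiso hext⟩
end

section
/- Let A be a finite dimensional algebra over an algebraically closed field and let T be a finite dimensional silting A-module. Let X be a finite dimensional module in Gen T such that for every homomorphism g : Y → X with Y finite dimensional and Y ∈ Gen T one has Ker g ∈ Gen T. Then X ∈ 𝔞(Gen T), i.e. for every homomorphism g : Y → X with Y ∈ Gen T (Y an arbitrary, possibly infinite dimensional, module), Ker g ∈ Gen T. -/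
universe u

open DirectSum

/-! A module `M` lies in `Gen T` exactly when the images of the maps `T → M` span `M`, so `Gen T`
is closed under quotients and under sums of submodules. Given `Y ∈ Gen T` and `g : Y → X`, choose
`p : T^(κ) ↠ Y`; then `Ker g` is the image of `Ker (g ∘ p)`, and `Ker (g ∘ p)` is the union of the
kernels of the restrictions of `g ∘ p` to the finitely supported pieces `T^(s)`, `s ⊆ κ` finite.
Those pieces are finite dimensional, so their kernels lie in `Gen T` by hypothesis. -/

namespace GenM

variable {A : Type u} [Ring A] {T M N : ModuleCat.{u} A}

theorem of_surjective (hM : GenM T M) (f : M →ₗ[A] N) (hf : Function.Surjective f) :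
    GenM T N := by
  obtain ⟨ι, p, hp⟩ := hM
  exact ⟨ι, f.comp p, hf.comp hp⟩

theorem finsupp (ι : Type u) : GenM T (ModuleCat.of A (ι →₀ (T : Type u))) :=
  ⟨ι, LinearMap.id, Function.surjective_id⟩

theorem range_le_iSup_range (hN : GenM T N) (f : N →ₗ[A] M) :
    LinearMap.range f ≤ ⨆ φ : (T : Type u) →ₗ[A] M, LinearMap.range φ := by
  obtain ⟨ι, p, hp⟩ := hN
  rw [← LinearMap.range_comp_of_range_eq_top f (LinearMap.range_eq_top.mpr hp),
    LinearMap.range_eq_map, ← Finsupp.iSup_lsingle_range, Submodule.map_iSup]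
  refine iSup_le fun i => ?_
  rw [← LinearMap.range_comp]
  exact le_iSup (fun φ : (T : Type u) →ₗ[A] M => LinearMap.range φ) _

theorem of_iSup_range_eq_top (h : ⨆ φ : (T : Type u) →ₗ[A] M, LinearMap.range φ = ⊤) :
    GenM T M := by
  refine ⟨(T : Type u) →ₗ[A] M, Finsupp.lsum ℕ id, LinearMap.range_eq_top.mp (top_le_iff.mp ?_)⟩
  rw [← h]
  refine iSup_le fun φ => ?_
  rintro _ ⟨t, rfl⟩
  exact ⟨Finsupp.single φ t, by simp⟩

theorem of_iSup_range_eq_top_of_genM {ι : Sort*} {N : ι → ModuleCat.{u} A}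
    (hN : ∀ i, GenM T (N i)) (f : ∀ i, N i →ₗ[A] M)
    (hf : ⨆ i, LinearMap.range (f i) = ⊤) : GenM T M :=
  of_iSup_range_eq_top <| top_le_iff.mp <| hf ▸ iSup_le fun i => (hN i).range_le_iSup_range (f i)

theorem ker_of_ker_comp_surjective {X : ModuleCat.{u} A} {P : Type u} [AddCommGroup P]
    [Module A P] (p : P →ₗ[A] N) (hp : Function.Surjective p) (g : N →ₗ[A] X)
    (h : GenM T (ModuleCat.of A (LinearMap.ker (g.comp p)))) :
    GenM T (ModuleCat.of A (LinearMap.ker g)) := by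
  refine h.of_surjective (p.restrict fun _ hx => hx) ?_
  rintro ⟨y, hy⟩
  obtain ⟨x, rfl⟩ := hp y
  exact ⟨⟨x, hy⟩, rfl⟩

theorem ker_finsupp_of_ker_finite {X : ModuleCat.{u} A} [Module.Finite A T] {κ : Type u}
    (h : ∀ Y : ModuleCat.{u} A, Module.Finite A Y → ∀ g : Y →ₗ[A] X, GenM T Y →
      GenM T (ModuleCat.of A (LinearMap.ker g)))
    (g : (κ →₀ (T : Type u)) →ₗ[A] X) : GenM T (ModuleCat.of A (LinearMap.ker g)) := by
  let T_s (s : Finset κ) := Finsupp.supported (T : Type u) A (s : Set κ)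
  have hT_s (s : Finset κ) : GenM T (ModuleCat.of A (T_s s)) :=
    (finsupp (s : Set κ)).of_surjective _
      (Finsupp.supportedEquivFinsupp (s : Set κ)).symm.surjective
  have : ∀ s, Module.Finite A (T_s s) := fun s =>
    Module.Finite.equiv (Finsupp.supportedEquivFinsupp (s : Set κ)).symm
  have hker (s : Finset κ) := h _ inferInstance (g.comp (T_s s).subtype) (hT_s s)
  refine of_iSup_range_eq_top_of_genM hker
    (fun s => (T_s s).subtype.restrict (p := LinearMap.ker (g.comp (T_s s).subtype))
      (q := LinearMap.ker g) fun _ hx => hx) ?_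
  refine eq_top_iff.mpr fun x _ => Submodule.mem_iSup_of_mem x.1.support ?_
  exact ⟨⟨⟨x.1, Finsupp.mem_supported_support A x.1⟩, x.2⟩, rfl⟩

end GenM

theorem stmt16_general {A : Type u} [Ring A]
    (T : ModuleCat.{u} A) (hTfd : Module.Finite A T)
    (X : ModuleCat.{u} A) (hX : GenM T X)
    (h : ∀ Y : ModuleCat.{u} A, Module.Finite A Y → ∀ g : Y →ₗ[A] X, GenM T Y →
      GenM T (ModuleCat.of A (LinearMap.ker g))) :
    aSub (GenM T) X := by
  refine ⟨hX, fun Y g ⟨κ, p, hp⟩ => ?_⟩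
  exact GenM.ker_of_ker_comp_surjective p hp g (GenM.ker_finsupp_of_ker_finite h (g.comp p))

/-- Over a finite dimensional algebra, if `T` is a finite dimensional
silting module and `X` is a finite dimensional module in `Gen T` such that kernels of
maps from finite dimensional modules of `Gen T` to `X` lie in `Gen T`, then
`X ∈ 𝔞(Gen T)`. -/
theorem stmt16 {𝕂 : Type u} [Field 𝕂] [IsAlgClosed 𝕂]
    {A : Type u} [Ring A] [Algebra 𝕂 A] [FiniteDimensional 𝕂 A]
    (T : ModuleCat.{u} A) (hTfd : Module.Finite A T) (hTsilt : IsSilting T)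
    (X : ModuleCat.{u} A) (hXfd : Module.Finite A X) (hX : GenM T X)
    (h : ∀ Y : ModuleCat.{u} A, Module.Finite A Y → ∀ g : Y →ₗ[A] X, GenM T Y →
      GenM T (ModuleCat.of A (LinearMap.ker g))) :
    aSub (GenM T) X :=
  stmt16_general T hTfd X hX h
end
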